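/- arXiv:2206.07880 — 5 statements merged into one kernel-verified Lean document; each statement's English description precedes it below -/
import Mathlib

section
/- Fix $n, N \ge 1$ and $0 < \lambda \le \Lambda$. Let $\pi = (-1, \pi_2, \dots, \pi_n) \in \mathbb{R}^n$ (so $\pi_1 = -1$). Let $A_{ij}^{\alpha\beta}, F_\alpha^i, \zeta_\alpha^i$ ($1 \le i,j \le N$, $1 \le \alpha,\beta \le n$) be real constants with the ellipticity bounds $\lambda|\xi|^2 \le \sum_{i,j,\alpha,\beta} A_{ij}^{\alpha\beta}\xi_\alpha^i \xi_\beta^j$ for all $\xi \in \mathbb{R}^{Nn}$ and $|A_{ij}^{\alpha\beta}| \le \Lambda$. Define $U \in \mathbb{R}^{Nn}$ by $U_1^i = \sum_\alpha \pi_\alpha[(\sum_{j,\beta} A_{ij}^{\alpha\beta}\zeta_\beta^j) - F_\alpha^i]$ and $U_\beta^i = \zeta_\beta^i + \pi_\beta \zeta_1^i$ for $\beta = 2, \dots, n$. Then $|\zeta| \le c(|U| + |F|)$ where $c$ depends only on $n, N, \lambda, \Lambda$. -/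
/-!
Apply ellipticity to the rank-one matrix `ξ = π ⊗ ζ₁`. Since `π₁ = -1`, `ξ = V - ζ`, where `V`
agrees with `U` off the first column and vanishes on it. Hence the quadratic form of `ξ` equals
`∑ᵢ ζ₁ⁱ (∑_α π_α ((A V)_αⁱ - F_αⁱ) - U₁ⁱ)`, which is at most `C |π| |ζ₁| (|U| + |F|)` because
`|π| ≥ 1`. Comparing with `λ |π|² |ζ₁|²` bounds `|π| |ζ₁|`, and then `ζ = V - π ⊗ ζ₁` is bounded
entrywise.
-/

open Finset

section

variable {ι κ : Type*} [Fintype ι] [Fintype κ]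

lemma abs_le_sqrt_sum_sq (x : ι → ℝ) (a : ι) : |x a| ≤ √(∑ a, x a ^ 2) :=
  Real.abs_le_sqrt <| single_le_sum (fun _ _ ↦ sq_nonneg _) (mem_univ a)

lemma abs_le_sqrt_sum_sum_sq (x : ι → κ → ℝ) (a : ι) (b : κ) :
    |x a b| ≤ √(∑ a, ∑ b, x a b ^ 2) :=
  Real.abs_le_sqrt <| (single_le_sum (fun _ _ ↦ sq_nonneg _) (mem_univ b)).trans <|
    single_le_sum (f := fun a ↦ ∑ b, x a b ^ 2)
      (fun _ _ ↦ sum_nonneg fun _ _ ↦ sq_nonneg _) (mem_univ a)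

lemma sqrt_sum_sum_sq_le_of_abs_le {x : ι → κ → ℝ} {M : ℝ} (hM : 0 ≤ M)
    (hx : ∀ a b, |x a b| ≤ M) :
    √(∑ a, ∑ b, x a b ^ 2) ≤ √(Fintype.card ι * Fintype.card κ) * M := by
  calc √(∑ a, ∑ b, x a b ^ 2) ≤ √(∑ _a : ι, ∑ _b : κ, M ^ 2) :=
        Real.sqrt_le_sqrt <| sum_le_sum fun a _ ↦ sum_le_sum fun b _ ↦
          sq_le_sq' (abs_le.mp (hx a b)).1 (abs_le.mp (hx a b)).2
    _ = √(Fintype.card ι * Fintype.card κ) * M := by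
        simp only [sum_const, card_univ, nsmul_eq_mul, ← mul_assoc]
        rw [Real.sqrt_mul (by positivity), Real.sqrt_sq hM]

lemma abs_sum_le_card_mul {f : ι → ℝ} {M : ℝ} (hf : ∀ a, |f a| ≤ M) :
    |∑ a, f a| ≤ Fintype.card ι * M := by
  simpa using (abs_sum_le_sum_abs f univ).trans (sum_le_card_nsmul univ _ M fun a _ ↦ hf a)

def flux (A : κ → κ → ι → ι → ℝ) (x : ι → κ → ℝ) (α : ι) (i : κ) : ℝ :=
  ∑ j, ∑ β, A i j α β * x β j

lemma sum_mul_mul_eq_sum_mul_flux (A : κ → κ → ι → ι → ℝ) (ξ : ι → κ → ℝ) :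
    ∑ i, ∑ j, ∑ α, ∑ β, A i j α β * ξ α i * ξ β j = ∑ α, ∑ i, ξ α i * flux A ξ α i := by
  simp only [flux, mul_sum]
  conv_rhs => rw [Finset.sum_comm]
  refine sum_congr rfl fun i _ ↦ ?_
  rw [Finset.sum_comm]
  exact sum_congr rfl fun α _ ↦ sum_congr rfl fun j _ ↦ sum_congr rfl fun β _ ↦ by ring

lemma flux_sub (A : κ → κ → ι → ι → ℝ) (x y : ι → κ → ℝ) :
    flux A (x - y) = flux A x - flux A y := by
  ext α i
  simp only [flux, Pi.sub_apply, mul_sub, sum_sub_distrib]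

lemma abs_flux_le {A : κ → κ → ι → ι → ℝ} {x : ι → κ → ℝ} {Λ M : ℝ}
    (hA : ∀ i j α β, |A i j α β| ≤ Λ) (hx : ∀ β j, |x β j| ≤ M) (α : ι) (i : κ) :
    |flux A x α i| ≤ Fintype.card κ * (Fintype.card ι * (Λ * M)) :=
  abs_sum_le_card_mul fun j ↦ abs_sum_le_card_mul fun β ↦ by
    rw [abs_mul]
    exact mul_le_mul (hA i j α β) (hx β j) (abs_nonneg _) ((abs_nonneg _).trans (hA i j α β))

variable {A : κ → κ → ι → ι → ℝ} {π : ι → ℝ} {z : κ → ℝ} {V ζ F : ι → κ → ℝ} {U₀ : κ → ℝ}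

lemma sum_mul_flux_rankOne_eq (hV : ∀ β j, π β * z j = V β j - ζ β j)
    (hU₀ : ∀ i, U₀ i = ∑ α, π α * (flux A ζ α i - F α i)) :
    ∑ α, ∑ i, π α * z i * flux A (fun β j ↦ π β * z j) α i =
      ∑ i, z i * (∑ α, π α * (flux A V α i - F α i) - U₀ i) := by
  have hξ : (fun β j ↦ π β * z j) = V - ζ := funext fun β ↦ funext fun j ↦ hV β j
  rw [hξ, flux_sub, Finset.sum_comm]
  refine sum_congr rfl fun i _ ↦ ?_
  rw [hU₀, ← sum_sub_distrib, mul_sum]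
  exact sum_congr rfl fun α _ ↦ by simp only [Pi.sub_apply]; ring

lemma abs_sum_mul_flux_sub_le {Lam s : ℝ} (hA : ∀ i j α β, |A i j α β| ≤ Lam)
    (hπ : 1 ≤ √(∑ α, π α ^ 2)) (hs : 0 ≤ s) (hVs : ∀ β j, |V β j| ≤ s)
    (hFs : ∀ α i, |F α i| ≤ s) (hU₀s : ∀ i, |U₀ i| ≤ s) (i : κ) :
    |∑ α, π α * (flux A V α i - F α i) - U₀ i| ≤
      √(∑ α, π α ^ 2) *
        ((Fintype.card ι * (Fintype.card κ * Fintype.card ι * Lam + 1) + 1) * s) := by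
  set P := √(∑ α, π α ^ 2)
  have hflux : ∀ α, |π α * (flux A V α i - F α i)| ≤
      P * ((Fintype.card κ * Fintype.card ι * Lam + 1) * s) := fun α ↦ by
    rw [abs_mul]
    refine mul_le_mul (abs_le_sqrt_sum_sq π α) ?_ (abs_nonneg _) (Real.sqrt_nonneg _)
    calc |flux A V α i - F α i| ≤ |flux A V α i| + |F α i| := abs_sub _ _
      _ ≤ Fintype.card κ * (Fintype.card ι * (Lam * s)) + s :=
          add_le_add (abs_flux_le hA hVs α i) (hFs α i)
      _ = _ := by ring
  calc _ ≤ |∑ α, π α * (flux A V α i - F α i)| + |U₀ i| := abs_sub _ _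
    _ ≤ Fintype.card ι * (P * ((Fintype.card κ * Fintype.card ι * Lam + 1) * s)) + P * s :=
        add_le_add (abs_sum_le_card_mul hflux) (le_mul_of_one_le_left hs hπ |>.trans' (hU₀s i))
    _ = _ := by ring

lemma mul_sqrt_mul_sqrt_le_of_sub_rankOne {lam Lam s : ℝ}
    (hell : ∀ ξ : ι → κ → ℝ,
      lam * ∑ α, ∑ i, (ξ α i) ^ 2 ≤ ∑ i, ∑ j, ∑ α, ∑ β, A i j α β * ξ α i * ξ β j)
    (hA : ∀ i j α β, |A i j α β| ≤ Lam) (hLam : 0 ≤ Lam) (hπ : 1 ≤ √(∑ α, π α ^ 2)) (hs : 0 ≤ s)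
    (hVs : ∀ β j, |V β j| ≤ s) (hFs : ∀ α i, |F α i| ≤ s) (hU₀s : ∀ i, |U₀ i| ≤ s)
    (hV : ∀ β j, π β * z j = V β j - ζ β j)
    (hU₀ : ∀ i, U₀ i = ∑ α, π α * (flux A ζ α i - F α i)) :
    lam * (√(∑ α, π α ^ 2) * √(∑ i, z i ^ 2)) ≤
      Fintype.card κ * (Fintype.card ι * (Fintype.card κ * Fintype.card ι * Lam + 1) + 1) * s := by
  set P := √(∑ α, π α ^ 2)
  set Z := √(∑ i, z i ^ 2)
  set K := (Fintype.card ι * (Fintype.card κ * Fintype.card ι * Lam + 1) + 1 : ℝ)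
  have hlow : lam * (P * Z) ^ 2 ≤ ∑ α, ∑ i, π α * z i * flux A (fun β j ↦ π β * z j) α i := by
    have hnorm : (P * Z) ^ 2 = ∑ α, ∑ i, (π α * z i) ^ 2 := by
      rw [mul_pow, Real.sq_sqrt (by positivity), Real.sq_sqrt (by positivity), sum_mul_sum]
      simp only [mul_pow]
    rw [hnorm, ← sum_mul_mul_eq_sum_mul_flux]
    exact hell _
  have hup : ∑ α, ∑ i, π α * z i * flux A (fun β j ↦ π β * z j) α i ≤
      Fintype.card κ * (Z * (P * (K * s))) := by
    rw [sum_mul_flux_rankOne_eq hV hU₀]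
    refine (le_abs_self _).trans (abs_sum_le_card_mul fun i ↦ ?_)
    rw [abs_mul]
    exact mul_le_mul (abs_le_sqrt_sum_sq z i)
      (abs_sum_mul_flux_sub_le hA hπ hs hVs hFs hU₀s i) (abs_nonneg _) (Real.sqrt_nonneg _)
  have hcancel : lam * (P * Z) * (P * Z) ≤ Fintype.card κ * K * s * (P * Z) := by
    linarith [hlow.trans hup]
  rcases (mul_nonneg (Real.sqrt_nonneg _) (Real.sqrt_nonneg _) : 0 ≤ P * Z).eq_or_lt with h | h
  · rw [← h, mul_zero]
    positivity
  · exact le_of_mul_le_mul_right hcancel h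

lemma sqrt_sum_sum_sq_le_of_sub_rankOne {lam Lam s : ℝ} (hlam : 0 < lam)
    (hell : ∀ ξ : ι → κ → ℝ,
      lam * ∑ α, ∑ i, (ξ α i) ^ 2 ≤ ∑ i, ∑ j, ∑ α, ∑ β, A i j α β * ξ α i * ξ β j)
    (hA : ∀ i j α β, |A i j α β| ≤ Lam) (hLam : 0 ≤ Lam) (hπ : 1 ≤ √(∑ α, π α ^ 2)) (hs : 0 ≤ s)
    (hVs : ∀ β j, |V β j| ≤ s) (hFs : ∀ α i, |F α i| ≤ s) (hU₀s : ∀ i, |U₀ i| ≤ s)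
    (hV : ∀ β j, π β * z j = V β j - ζ β j)
    (hU₀ : ∀ i, U₀ i = ∑ α, π α * (flux A ζ α i - F α i)) :
    √(∑ α, ∑ i, ζ α i ^ 2) ≤ √(Fintype.card ι * Fintype.card κ) *
      ((1 + Fintype.card κ *
        (Fintype.card ι * (Fintype.card κ * Fintype.card ι * Lam + 1) + 1) / lam) * s) := by
  have hPZ := mul_sqrt_mul_sqrt_le_of_sub_rankOne hell hA hLam hπ hs hVs hFs hU₀s hV hU₀
  refine sqrt_sum_sum_sq_le_of_abs_le (by positivity) fun β j ↦ ?_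
  calc |ζ β j| = |V β j - π β * z j| := by rw [hV, sub_sub_cancel]
    _ ≤ s + √(∑ α, π α ^ 2) * √(∑ i, z i ^ 2) := by
        refine (abs_sub _ _).trans (add_le_add (hVs β j) ?_)
        rw [abs_mul]
        exact mul_le_mul (abs_le_sqrt_sum_sq π β) (abs_le_sqrt_sum_sq z j)
          (abs_nonneg _) (Real.sqrt_nonneg _)
    _ ≤ _ := by
        rw [add_mul, one_mul, div_mul_eq_mul_div, add_le_add_iff_left, le_div_iff₀ hlam]
        linarith

end

/-- The conormal-type quantities `U` control the full gradient matrix `ζ`: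
`|ζ| ≤ c (|U| + |F|)` with `c = c(n, N, λ, Λ)`. -/
theorem stmt_2 (n N : ℕ) [NeZero n] [NeZero N] (lam Lam : ℝ)
    (hlam : 0 < lam) (hLam : lam ≤ Lam) :
    ∃ c > 0, ∀ (π : Fin n → ℝ) (A : Fin N → Fin N → Fin n → Fin n → ℝ)
      (F ζ U : Fin n → Fin N → ℝ),
      π 0 = -1 →
      (∀ ξ : Fin n → Fin N → ℝ,
        lam * ∑ α, ∑ i, (ξ α i) ^ 2 ≤ ∑ i, ∑ j, ∑ α, ∑ β, A i j α β * ξ α i * ξ β j) →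
      (∀ i j α β, |A i j α β| ≤ Lam) →
      (∀ i, U 0 i = ∑ α, π α * ((∑ j, ∑ β, A i j α β * ζ β j) - F α i)) →
      (∀ i, ∀ β : Fin n, β ≠ 0 → U β i = ζ β i + π β * ζ 0 i) →
      Real.sqrt (∑ α, ∑ i, (ζ α i) ^ 2) ≤
        c * (Real.sqrt (∑ α, ∑ i, (U α i) ^ 2) + Real.sqrt (∑ α, ∑ i, (F α i) ^ 2)) := by
  have hLam₀ : 0 < Lam := hlam.trans_le hLam
  have hnN : (0 : ℝ) < n * N := mul_pos (mod_cast NeZero.pos n) (mod_cast NeZero.pos N)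
  refine ⟨√(n * N) * (1 + N * (n * (N * n * Lam + 1) + 1) / lam),
    mul_pos (Real.sqrt_pos.2 hnN) (by positivity), ?_⟩
  intro π A F ζ U hπ hell hA hU₀ hU
  set s := √(∑ α, ∑ i, (U α i) ^ 2) + √(∑ α, ∑ i, (F α i) ^ 2)
  have hUs : ∀ β j, |U β j| ≤ s := fun β j ↦
    (abs_le_sqrt_sum_sum_sq U β j).trans (le_add_of_nonneg_right (Real.sqrt_nonneg _))
  have hFs : ∀ α i, |F α i| ≤ s := fun α i ↦
    (abs_le_sqrt_sum_sum_sq F α i).trans (le_add_of_nonneg_left (Real.sqrt_nonneg _))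
  have hP : 1 ≤ √(∑ α, π α ^ 2) := by simpa [hπ] using abs_le_sqrt_sum_sq π 0
  set V : Fin n → Fin N → ℝ := fun β j ↦ ζ β j + π β * ζ 0 j
  have hVs : ∀ β j, |V β j| ≤ s := fun β j ↦ by
    by_cases hβ : β = 0
    · simp only [V, hβ, hπ, neg_one_mul, add_neg_cancel, abs_zero]
      positivity
    · simpa only [V, hU j β hβ] using hUs β j
  simpa only [Fintype.card_fin, mul_assoc] using
    sqrt_sum_sum_sq_le_of_sub_rankOne (z := ζ 0) (V := V) hlam hell hA hLam₀.le hP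
      (by positivity) hVs hFs (fun i ↦ hUs 0 i) (fun β j ↦ (add_sub_cancel_left _ _).symm) hU₀
end

section
/- Fix $n, N \ge 1$, $0 < \lambda \le \Lambda$, and two points $x \ne y$ in $\mathbb{R}^n$. Let $\pi = (-1, \pi')$, $A_{ij}^{\alpha\beta}$, $F_\alpha^i$, $\zeta_\alpha^i$ be functions on the two-point set $\{x, y\}$ with $\lambda|\xi|^2 \le \sum A_{ij}^{\alpha\beta}(z)\xi_\alpha^i\xi_\beta^j$ and $|A_{ij}^{\alpha\beta}(z)| \le \Lambda$ for $z \in \{x,y\}$, $\xi \in \mathbb{R}^{Nn}$. Define $U$ on $\{x,y\}$ by $U_1^i = \sum_\alpha \pi_\alpha[(\sum_{j,\beta} A_{ij}^{\alpha\beta}\zeta_\beta^j) - F_\alpha^i]$ and $U_\beta^i = \zeta_\beta^i + \pi_\beta\zeta_1^i$ for $\beta \ge 2$. Then $|\zeta(x) - \zeta(y)| \le c[|U(y)-U(x)| + |F(y)-F(x)|] + c[|U(x)|+|F(x)|][|\pi(x)-\pi(y)| + |\pi(x)-\pi(y)|^2] + c[|U(x)|+|F(x)|]\sum_{i,j,\alpha,\beta}|A_{ij}^{\alpha\beta}(y)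 - A_{ij}^{\alpha\beta}(x)|$, where $c$ depends only on $n, N, \lambda, \Lambda$. -/
/-!
Write `o` for the distinguished first index. Since `π_o = -1`, the relations
`U_β = ζ_β + π_β ζ_o` (`β ≠ o`) say `ζ = U' - π ⊗ ζ_o`, where `U'` is `U` with its row `o`
replaced by zero. Substituting this into the definition of `U_o` leaves the `N × N` system
`M ζ_o = R`, with `M v = Σ π_α A^{αβ} π_β v` and `R` linear in `(U, F)`; testing the Legendre
condition on `π ⊗ v` gives `λ |π|² |v| ≤ |M v|`. Since `|π| ≥ 1` and `|R| ≤ c |π| (|U| + |F|)`,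
this yields `λ |π(x)| |ζ_o(x)| ≤ c (|U(x)| + |F(x)|)`. Subtracting the systems at `x` and `y`
bounds `λ |π(y)|² |ζ_o(y) - ζ_o(x)|` by the oscillations of `M` and `R`; every power of `|π|`
that appears there is absorbed either by the factor `|π(y)|` or by the weighted bound on
`|π(x)| |ζ_o(x)|`. Finally
`ζ(y) - ζ(x) = U'(y) - U'(x) - π(y) ⊗ (ζ_o(y) - ζ_o(x)) - (π(y) - π(x)) ⊗ ζ_o(x)`.
-/

open Finset Function

namespace ConormalOscillation

lemma update_sub_zero {ι β : Type*} [DecidableEq ι] [AddGroup β] (V W : ι → β) (o : ι) :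
    update (V - W) o 0 = update V o 0 - update W o 0 := by
  rw [← Function.update_sub, sub_zero]

section L2

variable {ι κ : Type*} [Fintype ι] [Fintype κ]

noncomputable def l2 (f : ι → ℝ) : ℝ := √(∑ i, f i ^ 2)

lemma l2_eq_norm (f : ι → ℝ) : l2 f = ‖WithLp.toLp 2 f‖ := by
  simp [l2, EuclideanSpace.norm_eq]

lemma l2_nonneg (f : ι → ℝ) : 0 ≤ l2 f := Real.sqrt_nonneg _

lemma l2_add_le (f g : ι → ℝ) : l2 (f + g) ≤ l2 f + l2 g := by
  simpa only [l2_eq_norm, WithLp.toLp_add] using norm_add_le _ _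

lemma l2_sub_le (f g : ι → ℝ) : l2 (f - g) ≤ l2 f + l2 g := by
  simpa only [l2_eq_norm, WithLp.toLp_sub] using norm_sub_le _ _

lemma l2_sub_comm (f g : ι → ℝ) : l2 (f - g) = l2 (g - f) := by
  simp only [l2_eq_norm, WithLp.toLp_sub, norm_sub_rev]

lemma abs_le_l2 (f : ι → ℝ) (i : ι) : |f i| ≤ l2 f := by
  simpa [l2_eq_norm] using PiLp.norm_apply_le (WithLp.toLp 2 f) i

lemma l2_le_sum_abs (f : ι → ℝ) : l2 f ≤ ∑ i, |f i| := by
  refine Real.sqrt_le_iff.2 ⟨by positivity, ?_⟩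
  simpa only [sq_abs] using sum_sq_le_sq_sum_of_nonneg (s := univ) fun i _ => abs_nonneg (f i)

lemma l2_le_l2_of_abs_le {f g : ι → ℝ} (h : ∀ i, |f i| ≤ |g i|) : l2 f ≤ l2 g :=
  Real.sqrt_le_sqrt <| sum_le_sum fun i _ => sq_le_sq.2 (h i)

lemma sum_mul_le_l2_mul_l2 (f g : ι → ℝ) : ∑ i, f i * g i ≤ l2 f * l2 g := by
  simpa [l2_eq_norm, EuclideanSpace.inner_eq_star_dotProduct, dotProduct, mul_comm]
    using real_inner_le_norm (WithLp.toLp 2 f) (WithLp.toLp 2 g)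

lemma mul_l2_le_of_le_sum_mul {u v : ι → ℝ} {c : ℝ} (h : c * ∑ i, v i ^ 2 ≤ ∑ i, u i * v i) :
    c * l2 v ≤ l2 u := by
  rcases (l2_nonneg v).eq_or_lt with hv | hv
  · rw [← hv, mul_zero]; exact l2_nonneg u
  refine le_of_mul_le_mul_right ?_ hv
  calc c * l2 v * l2 v = c * ∑ i, v i ^ 2 := by
        rw [mul_assoc, ← sq, l2, Real.sq_sqrt (by positivity)]
    _ ≤ l2 u * l2 v := h.trans (sum_mul_le_l2_mul_l2 u v)

lemma one_le_l2_of_eq_neg_one {p : ι → ℝ} {o : ι} (hp : p o = -1) : 1 ≤ l2 p := by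
  simpa [hp] using abs_le_l2 p o

noncomputable def frob (V : ι → κ → ℝ) : ℝ := √(∑ a, ∑ i, V a i ^ 2)

lemma frob_eq_l2_uncurry (V : ι → κ → ℝ) : frob V = l2 (uncurry V) := by
  rw [frob, l2, Fintype.sum_prod_type]; rfl

lemma frob_nonneg (V : ι → κ → ℝ) : 0 ≤ frob V := Real.sqrt_nonneg _

lemma frob_add_le (V W : ι → κ → ℝ) : frob (V + W) ≤ frob V + frob W := by
  simp only [frob_eq_l2_uncurry]; exact l2_add_le (uncurry V) (uncurry W)

lemma frob_sub_le (V W : ι → κ → ℝ) : frob (V - W) ≤ frob V + frob W := by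
  simp only [frob_eq_l2_uncurry]; exact l2_sub_le (uncurry V) (uncurry W)

lemma frob_sub_comm (V W : ι → κ → ℝ) : frob (V - W) = frob (W - V) := by
  simp only [frob_eq_l2_uncurry]; exact l2_sub_comm (uncurry V) (uncurry W)

lemma abs_le_frob (V : ι → κ → ℝ) (a : ι) (i : κ) : |V a i| ≤ frob V := by
  rw [frob_eq_l2_uncurry]; exact abs_le_l2 (uncurry V) (a, i)

lemma l2_le_frob (V : ι → κ → ℝ) (a : ι) : l2 (V a) ≤ frob V :=
  Real.sqrt_le_sqrt <| single_le_sum (f := fun b => ∑ i, V b i ^ 2)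
    (fun _ _ => by positivity) (mem_univ a)

lemma frob_update_zero_le [DecidableEq ι] (V : ι → κ → ℝ) (o : ι) :
    frob (update V o 0) ≤ frob V := by
  simp only [frob_eq_l2_uncurry]
  refine l2_le_l2_of_abs_le fun ⟨a, i⟩ => ?_
  by_cases h : a = o
  · subst h; simp
  · simp [h]

lemma frob_outer (p : ι → ℝ) (v : κ → ℝ) : frob (fun a i => p a * v i) = l2 p * l2 v := by
  rw [frob, l2, l2, ← Real.sqrt_mul (by positivity), sum_mul_sum]
  simp only [mul_pow]

lemma l2_vecMul_le (p : ι → ℝ) (W : ι → κ → ℝ) : l2 (Matrix.vecMul p W) ≤ l2 p * frob W := by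
  refine Real.sqrt_le_iff.2 ⟨by positivity [l2_nonneg p, frob_nonneg W], ?_⟩
  calc ∑ i, Matrix.vecMul p W i ^ 2 ≤ ∑ i, (∑ a, p a ^ 2) * ∑ a, W a i ^ 2 :=
        sum_le_sum fun i _ => sum_mul_sq_le_sq_mul_sq _ _ _
    _ = (l2 p * frob W) ^ 2 := by
        rw [← mul_sum, sum_comm, mul_pow, l2, frob, Real.sq_sqrt (by positivity),
          Real.sq_sqrt (by positivity)]

end L2

section Conormal

variable {ι κ : Type*} [Fintype ι] [Fintype κ]

def coefL1 (A : κ → κ → ι → ι → ℝ) : ℝ := ∑ i, ∑ j, ∑ α, ∑ β, |A i j α β|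

lemma coefL1_nonneg (A : κ → κ → ι → ι → ℝ) : 0 ≤ coefL1 A := by
  unfold coefL1; positivity

lemma coefL1_sub_le (A B : κ → κ → ι → ι → ℝ) : coefL1 (A - B) ≤ coefL1 A + coefL1 B := by
  simp only [coefL1, ← sum_add_distrib]
  gcongr
  exact abs_sub _ _

lemma coefL1_le_of_abs_le {A : κ → κ → ι → ι → ℝ} {Λ : ℝ} (h : ∀ i j α β, |A i j α β| ≤ Λ) :
    coefL1 A ≤ Fintype.card κ ^ 2 * Fintype.card ι ^ 2 * Λ := by
  calc coefL1 A ≤ ∑ _i : κ, ∑ _j : κ, ∑ _α : ι, ∑ _β : ι, Λ := by unfold coefL1; gcongr; exact h ..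
    _ = _ := by simp only [sum_const, card_univ, nsmul_eq_mul]; ring

def conormal (p : ι → ℝ) (A : κ → κ → ι → ι → ℝ) (V : ι → κ → ℝ) : κ → ℝ :=
  fun i => ∑ j, ∑ α, ∑ β, p α * A i j α β * V β j

lemma conormal_sub_left (p q : ι → ℝ) (A : κ → κ → ι → ι → ℝ) (V : ι → κ → ℝ) :
    conormal (p - q) A V = conormal p A V - conormal q A V := by
  ext i; simp only [conormal, Pi.sub_apply, sub_mul, sum_sub_distrib]

lemma conormal_sub_coef (p : ι → ℝ) (A B : κ → κ → ι → ι → ℝ) (V : ι → κ → ℝ) :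
    conormal p (A - B) V = conormal p A V - conormal p B V := by
  ext i; simp only [conormal, Pi.sub_apply, mul_sub, sub_mul, sum_sub_distrib]

lemma conormal_sub_right (p : ι → ℝ) (A : κ → κ → ι → ι → ℝ) (V W : ι → κ → ℝ) :
    conormal p A (V - W) = conormal p A V - conormal p A W := by
  ext i; simp only [conormal, Pi.sub_apply, mul_sub, sum_sub_distrib]

lemma conormal_add_right (p : ι → ℝ) (A : κ → κ → ι → ι → ℝ) (V W : ι → κ → ℝ) :
    conormal p A (V + W) = conormal p A V + conormal p A W := by
  ext i; simp only [conormal, Pi.add_apply, mul_add, sum_add_distrib]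

lemma l2_conormal_le (p : ι → ℝ) (A : κ → κ → ι → ι → ℝ) (V : ι → κ → ℝ) :
    l2 (conormal p A V) ≤ coefL1 A * (l2 p * frob V) := by
  refine (l2_le_sum_abs _).trans ?_
  simp only [coefL1, sum_mul]
  gcongr with i _
  refine (abs_sum_le_sum_abs _ _).trans ?_
  gcongr with j _
  refine (abs_sum_le_sum_abs _ _).trans ?_
  gcongr with α _
  refine (abs_sum_le_sum_abs _ _).trans ?_
  gcongr with β _
  rw [abs_mul, abs_mul, mul_comm |p α|, mul_assoc]
  gcongr
  exacts [l2_nonneg p, abs_le_l2 p α, abs_le_frob V β j]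

def reducedOp (p : ι → ℝ) (A : κ → κ → ι → ι → ℝ) (v : κ → ℝ) : κ → ℝ :=
  conormal p A fun β j => p β * v j

def Elliptic (lam : ℝ) (A : κ → κ → ι → ι → ℝ) : Prop :=
  ∀ ξ : ι → κ → ℝ, lam * ∑ α, ∑ i, ξ α i ^ 2 ≤ ∑ i, ∑ j, ∑ α, ∑ β, A i j α β * ξ α i * ξ β j

lemma Elliptic.mul_le_l2_reducedOp {lam : ℝ} {A : κ → κ → ι → ι → ℝ} (hA : Elliptic lam A)
    (p : ι → ℝ) (v : κ → ℝ) : lam * l2 p ^ 2 * l2 v ≤ l2 (reducedOp p A v) := by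
  refine mul_l2_le_of_le_sum_mul ?_
  have h := hA fun β j => p β * v j
  calc lam * l2 p ^ 2 * ∑ i, v i ^ 2 = lam * ∑ α, ∑ i, (p α * v i) ^ 2 := by
        rw [l2, Real.sq_sqrt (by positivity), mul_assoc, sum_mul_sum]
        simp only [mul_pow]
    _ ≤ _ := h
    _ = ∑ i, reducedOp p A v i * v i := by
        simp only [reducedOp, conormal, sum_mul]
        exact sum_congr rfl fun i _ => sum_congr rfl fun j _ => sum_congr rfl fun α _ =>
          sum_congr rfl fun β _ => by ring

lemma reducedOp_sub_right (p : ι → ℝ) (A : κ → κ → ι → ι → ℝ) (v w : κ → ℝ) :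
    reducedOp p A (v - w) = reducedOp p A v - reducedOp p A w := by
  rw [reducedOp, reducedOp, reducedOp, ← conormal_sub_right]
  congr; ext β j; simp only [Pi.sub_apply, mul_sub]

lemma l2_reducedOp_sub_le (p q : ι → ℝ) (A B : κ → κ → ι → ι → ℝ) (v : κ → ℝ) :
    l2 (reducedOp q B v - reducedOp p A v)
      ≤ (coefL1 (B - A) * l2 q ^ 2 + coefL1 A * l2 (q - p) * (l2 q + l2 p)) * l2 v := by
  have e : reducedOp q B v - reducedOp p A v = conormal q (B - A) (fun β j => q β * v j)
      + conormal (q - p) A (fun β j => q β * v j) + conormal p A fun β j => (q - p) β * v j := by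
    have : (fun β j => (q - p) β * v j) = (fun β j => q β * v j) - fun β j => p β * v j := by
      ext β j; simp only [Pi.sub_apply, sub_mul]
    rw [this, conormal_sub_coef, conormal_sub_left, conormal_sub_right, reducedOp, reducedOp]
    abel
  rw [e]
  have h₁ := l2_conormal_le q (B - A) fun β j => q β * v j
  have h₂ := l2_conormal_le (q - p) A fun β j => q β * v j
  have h₃ := l2_conormal_le p A fun β j => (q - p) β * v j
  simp only [frob_outer] at h₁ h₂ h₃
  calc _ ≤ _ := (l2_add_le _ _).trans (add_le_add_left (l2_add_le _ _) _)
    _ ≤ _ := add_le_add (add_le_add h₁ h₂) h₃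
    _ = _ := by ring

section Reduction

variable [DecidableEq ι] {o : ι} {p q : ι → ℝ} {A B : κ → κ → ι → ι → ℝ}

def conormalField (o : ι) (p : ι → ℝ) (A : κ → κ → ι → ι → ℝ) (F ζ : ι → κ → ℝ) :
    ι → κ → ℝ :=
  update (fun β j => ζ β j + p β * ζ o j) o (conormal p A ζ - Matrix.vecMul p F)

def reducedRhs (o : ι) (p : ι → ℝ) (A : κ → κ → ι → ι → ℝ) (F U : ι → κ → ℝ) : κ → ℝ :=
  conormal p A (update U o 0) - U o - Matrix.vecMul p F

lemma update_conormalField_self (hp : p o = -1) (F ζ : ι → κ → ℝ) :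
    update (conormalField o p A F ζ) o 0 = ζ + fun β j => p β * ζ o j := by
  ext β j
  rcases eq_or_ne β o with rfl | hβ
  · simp [hp]
  · simp [conormalField, hβ]

lemma reducedOp_eq_reducedRhs (hp : p o = -1) (F ζ : ι → κ → ℝ) :
    reducedOp p A (ζ o) = reducedRhs o p A F (conormalField o p A F ζ) := by
  rw [reducedRhs, update_conormalField_self hp, conormal_add_right, conormalField, update_self,
    reducedOp]
  abel

lemma l2_conormal_update_le (p : ι → ℝ) (A : κ → κ → ι → ι → ℝ) (U : ι → κ → ℝ) (o : ι) :
    l2 (conormal p A (update U o 0)) ≤ coefL1 A * (l2 p * frob U) :=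
  (l2_conormal_le _ _ _).trans <| mul_le_mul_of_nonneg_left
    (mul_le_mul_of_nonneg_left (frob_update_zero_le U o) (l2_nonneg p)) (coefL1_nonneg A)

lemma l2_reducedRhs_le (hp : 1 ≤ l2 p) (F U : ι → κ → ℝ) :
    l2 (reducedRhs o p A F U) ≤ (1 + coefL1 A) * l2 p * (frob U + frob F) := by
  have h₁ := l2_conormal_update_le p A U o
  have h₂ : l2 (U o) ≤ l2 p * frob U :=
    (l2_le_frob U o).trans (le_mul_of_one_le_left (frob_nonneg U) hp)
  have h₃ := l2_vecMul_le p F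
  calc l2 (reducedRhs o p A F U) ≤ _ := (l2_sub_le _ _).trans (add_le_add_left (l2_sub_le _ _) _)
    _ ≤ _ := add_le_add (add_le_add h₁ h₂) h₃
    _ ≤ _ := by
      nlinarith [mul_nonneg (mul_nonneg (coefL1_nonneg A) (l2_nonneg p)) (frob_nonneg F)]

lemma l2_reducedRhs_sub_le (F G U W : ι → κ → ℝ) :
    l2 (reducedRhs o q B G W - reducedRhs o p A F U)
      ≤ frob (W - U) + l2 q * (coefL1 B * frob (W - U) + frob (G - F) + coefL1 (B - A) * frob U)
        + l2 (q - p) * (coefL1 A * frob U + frob F) := by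
  have e : reducedRhs o q B G W - reducedRhs o p A F U = conormal (q - p) A (update U o 0)
      + conormal q (B - A) (update U o 0) + conormal q B (update (W - U) o 0) - (W - U) o
      - (Matrix.vecMul (q - p) F + Matrix.vecMul q (G - F)) := by
    have h₁ : Matrix.vecMul (q - p) F = Matrix.vecMul q F - Matrix.vecMul p F :=
      Matrix.sub_vecMul _ _ _
    have h₂ : Matrix.vecMul q (G - F) = Matrix.vecMul q G - Matrix.vecMul q F :=
      Matrix.vecMul_sub _ _ _
    simp only [update_sub_zero, conormal_sub_left, conormal_sub_coef, conormal_sub_right, h₁, h₂,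
      reducedRhs, Pi.sub_apply]
    abel
  have h₁ := l2_conormal_update_le (q - p) A U o
  have h₂ := l2_conormal_update_le q (B - A) U o
  have h₃ := l2_conormal_update_le q B (W - U) o
  have h₄ := l2_le_frob (W - U) o
  have h₅ := l2_vecMul_le (q - p) F
  have h₆ := l2_vecMul_le q (G - F)
  rw [e]
  calc _ ≤ l2 (conormal (q - p) A (update U o 0)) + l2 (conormal q (B - A) (update U o 0))
        + l2 (conormal q B (update (W - U) o 0)) + l2 ((W - U) o)
        + (l2 (Matrix.vecMul (q - p) F) + l2 (Matrix.vecMul q (G - F))) := by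
        grw [l2_sub_le, l2_sub_le, l2_add_le, l2_add_le, l2_add_le]
    _ ≤ _ := by linarith

lemma Elliptic.mul_l2_mul_l2_le {lam : ℝ} (hA : Elliptic lam A) (hp : p o = -1)
    {F U ζ : ι → κ → ℝ} (hU : U = conormalField o p A F ζ) :
    lam * l2 p * l2 (ζ o) ≤ (1 + coefL1 A) * (frob U + frob F) := by
  have hP := one_le_l2_of_eq_neg_one hp
  have h := hA.mul_le_l2_reducedOp p (ζ o)
  rw [reducedOp_eq_reducedRhs hp F ζ, ← hU] at h
  refine le_of_mul_le_mul_right ?_ (zero_lt_one.trans_le hP)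
  calc lam * l2 p * l2 (ζ o) * l2 p = lam * l2 p ^ 2 * l2 (ζ o) := by ring
    _ ≤ _ := h.trans (l2_reducedRhs_le hP F U)
    _ = _ := by ring

lemma Elliptic.mul_l2_sq_mul_l2_sub_le {lam : ℝ} (hB : Elliptic lam B) (hp : p o = -1)
    (hq : q o = -1)
    {F G U W ζ ζ' : ι → κ → ℝ} (hU : U = conormalField o p A F ζ)
    (hW : W = conormalField o q B G ζ') :
    lam * l2 q ^ 2 * l2 (ζ' o - ζ o)
      ≤ l2 (reducedRhs o q B G W - reducedRhs o p A F U)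
        + l2 (reducedOp q B (ζ o) - reducedOp p A (ζ o)) := by
  have h := hB.mul_le_l2_reducedOp q (ζ' o - ζ o)
  rw [reducedOp_sub_right, reducedOp_eq_reducedRhs hq G ζ', ← hW] at h
  have e : reducedRhs o q B G W - reducedOp q B (ζ o)
      = reducedRhs o q B G W - reducedRhs o p A F U
        - (reducedOp q B (ζ o) - reducedOp p A (ζ o)) := by
    rw [reducedOp_eq_reducedRhs hp F ζ, ← hU]; abel
  rw [e] at h
  exact h.trans (l2_sub_le _ _)

lemma frob_sub_le_of_eq_conormalField (hp : p o = -1) (hq : q o = -1)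
    {F G U W ζ ζ' : ι → κ → ℝ} (hU : U = conormalField o p A F ζ)
    (hW : W = conormalField o q B G ζ') :
    frob (ζ' - ζ) ≤ frob (W - U) + l2 q * l2 (ζ' o - ζ o) + l2 (q - p) * l2 (ζ o) := by
  have e : ζ' - ζ = update (W - U) o 0
      - ((fun β j => q β * (ζ' o - ζ o) j) + fun β j => (q - p) β * ζ o j) := by
    rw [update_sub_zero, hU, hW, update_conormalField_self hp, update_conormalField_self hq]
    ext β j; simp only [Pi.add_apply, Pi.sub_apply]; ring
  rw [e]
  calc _ ≤ _ := frob_sub_le _ _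
    _ ≤ _ := add_le_add (frob_update_zero_le _ o) (frob_add_le _ _)
    _ = _ := by rw [frob_outer, frob_outer]; ring

lemma eq_conormalField {F U ζ : ι → κ → ℝ}
    (hUo : ∀ i, U o i = ∑ α, p α * ((∑ j, ∑ β, A i j α β * ζ β j) - F α i))
    (hU : ∀ i, ∀ β, β ≠ o → U β i = ζ β i + p β * ζ o i) :
    U = conormalField o p A F ζ := by
  ext β i
  rcases eq_or_ne β o with rfl | hβ
  · simp only [conormalField, update_self, hUo, Pi.sub_apply, conormal, Matrix.vecMul, dotProduct,
      mul_sub, sum_sub_distrib, mul_sum]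
    rw [sum_comm]
    simp only [mul_assoc]
  · simp [conormalField, hβ, hU i β hβ]

end Reduction

lemma mul_le_of_mul_sq_le {lam C a b P Q z δ dp dA dU dF Su Sf : ℝ} (ha₀ : 0 ≤ a) (ha : a ≤ C)
    (hb : b ≤ C) (hP : 0 ≤ P) (hQ : 1 ≤ Q) (hz : 0 ≤ z) (hdp : 0 ≤ dp) (hdA : 0 ≤ dA)
    (hdU : 0 ≤ dU) (hSu : 0 ≤ Su) (hSf : 0 ≤ Sf)
    (h : lam * Q ^ 2 * δ ≤ dU + Q * (b * dU + dF + dA * Su) + dp * (a * Su + Sf)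
      + (dA * Q ^ 2 + a * dp * (Q + P)) * z) :
    lam * Q * δ ≤ (1 + C) * (dU + dp * (Su + Sf)) + dF + dA * (Su + Sf) + dA * Q * z
      + C * dp * (1 + P) * z := by
  have hQ₀ : 0 < Q := by linarith
  refine le_of_mul_le_mul_left ?_ hQ₀
  have t₁ : dU + Q * (b * dU) ≤ Q * ((1 + C) * dU) := by
    nlinarith [mul_le_mul_of_nonneg_right hQ hdU,
      mul_le_mul_of_nonneg_left hb (mul_nonneg hQ₀.le hdU)]
  have t₂ : dp * (a * Su + Sf) ≤ Q * ((1 + C) * (dp * (Su + Sf))) := by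
    calc _ ≤ (1 + C) * (dp * (Su + Sf)) := by
          nlinarith [mul_le_mul_of_nonneg_right ha (mul_nonneg hdp hSu),
            mul_nonneg (ha₀.trans ha) (mul_nonneg hdp hSf), mul_nonneg hdp hSu]
      _ ≤ _ := le_mul_of_one_le_left (by nlinarith [mul_nonneg hdp (add_nonneg hSu hSf)]) hQ
  have t₃ : Q * (dA * Su) ≤ Q * (dA * (Su + Sf)) := by gcongr; linarith
  have t₄ : a * dp * (Q + P) * z ≤ Q * (C * dp * (1 + P) * z) := by
    calc _ ≤ C * dp * (Q + Q * P) * z := by gcongr <;> nlinarith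
      _ = _ := by ring
  linear_combination h + t₁ + t₂ + t₃ + t₄

lemma sq_mul_le_of_oscillation_bounds {lam C P Q z δ dp dA dU dF S Z : ℝ} (hlam : 0 < lam)
    (hC : 0 ≤ C) (hP : 1 ≤ P) (hQP : Q ≤ P + dp) (hz : 0 ≤ z) (hdp : 0 ≤ dp) (hdA₀ : 0 ≤ dA)
    (hdA : dA ≤ 2 * C) (hdU : 0 ≤ dU) (hdF : 0 ≤ dF) (hS : 0 ≤ S)
    (hpoint : lam * P * z ≤ (1 + C) * S)
    (hdiff : lam * Q * δ ≤ (1 + C) * (dU + dp * S) + dF + dA * S + dA * Q * z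
      + C * dp * (1 + P) * z)
    (hZ : Z ≤ dU + Q * δ + dp * z) :
    lam ^ 2 * Z ≤ (lam + 4 * (1 + C)) ^ 2 * (dU + dF + S * dp + S * dA) := by
  have hz' : lam * z ≤ (1 + C) * S := by
    nlinarith [mul_le_mul_of_nonneg_left hP (mul_nonneg hlam.le hz)]
  have h₁ : lam * (dA * Q * z) ≤ dA * ((1 + C) * S) + 2 * C * dp * ((1 + C) * S) := by
    calc lam * (dA * Q * z) ≤ dA * (lam * P * z) + dA * dp * (lam * z) := by
          nlinarith [mul_le_mul_of_nonneg_left hQP (by positivity : 0 ≤ lam * dA * z)]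
      _ ≤ _ := by gcongr
  have h₂ : lam * (C * dp * (1 + P) * z) ≤ 2 * C * dp * ((1 + C) * S) := by
    calc lam * (C * dp * (1 + P) * z) = C * dp * (lam * z + lam * P * z) := by ring
      _ ≤ C * dp * ((1 + C) * S + (1 + C) * S) := by gcongr
      _ = _ := by ring
  have h₃ : lam * (dp * z) ≤ dp * ((1 + C) * S) := by nlinarith
  have h₄ : lam ^ 2 * Z ≤ (lam ^ 2 + lam * (1 + C)) * dU + lam * dF
      + (2 * lam * (1 + C) + 4 * C * (1 + C)) * (S * dp) + (lam + (1 + C)) * (S * dA) := by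
    linarith [mul_le_mul_of_nonneg_left hdiff hlam.le, mul_le_mul_of_nonneg_left hZ (sq_nonneg lam),
      mul_le_mul_of_nonneg_left h₃ hlam.le]
  calc _ ≤ _ := h₄
    _ ≤ (lam + 4 * (1 + C)) ^ 2 * dU + (lam + 4 * (1 + C)) ^ 2 * dF
        + (lam + 4 * (1 + C)) ^ 2 * (S * dp) + (lam + 4 * (1 + C)) ^ 2 * (S * dA) := by
      gcongr ?_ * _ + ?_ * _ + ?_ * _ + ?_ * _ <;> nlinarith only [hlam, hC]
    _ = _ := by ring

theorem frob_sub_le_of_elliptic {ι κ : Type*} [Fintype ι] [Fintype κ] [DecidableEq ι] {o : ι}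
    {lam C : ℝ} {p q : ι → ℝ} {A B : κ → κ → ι → ι → ℝ} {F G U W ζ ζ' : ι → κ → ℝ}
    (hlam : 0 < lam) (hA : Elliptic lam A) (hB : Elliptic lam B) (hAC : coefL1 A ≤ C)
    (hBC : coefL1 B ≤ C) (hp : p o = -1) (hq : q o = -1) (hU : U = conormalField o p A F ζ)
    (hW : W = conormalField o q B G ζ') :
    frob (ζ' - ζ) ≤ ((lam + 4 * (1 + C)) / lam) ^ 2 * (frob (W - U) + frob (G - F)
      + (frob U + frob F) * l2 (q - p) + (frob U + frob F) * coefL1 (B - A)) := by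
  have hpoint : lam * l2 p * l2 (ζ o) ≤ (1 + C) * (frob U + frob F) :=
    (hA.mul_l2_mul_l2_le hp hU).trans <| by gcongr; exact add_nonneg (frob_nonneg U) (frob_nonneg F)
  have hdiff := mul_le_of_mul_sq_le (coefL1_nonneg A) hAC hBC (l2_nonneg p)
    (one_le_l2_of_eq_neg_one hq) (l2_nonneg _) (l2_nonneg _) (coefL1_nonneg _) (frob_nonneg _)
    (frob_nonneg _) (frob_nonneg _) <| (hB.mul_l2_sq_mul_l2_sub_le hp hq hU hW).trans
      (add_le_add (l2_reducedRhs_sub_le F G U W) (l2_reducedOp_sub_le p q A B (ζ o)))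
  have key := sq_mul_le_of_oscillation_bounds hlam ((coefL1_nonneg A).trans hAC)
    (one_le_l2_of_eq_neg_one hp) (by simpa using l2_add_le p (q - p)) (l2_nonneg _)
    (l2_nonneg _) (coefL1_nonneg _) ((coefL1_sub_le B A).trans (by linarith)) (frob_nonneg _)
    (frob_nonneg _) (add_nonneg (frob_nonneg U) (frob_nonneg F)) hpoint hdiff
    (frob_sub_le_of_eq_conormalField hp hq hU hW)
  rw [div_pow, div_mul_eq_mul_div, le_div_iff₀ (by positivity)]
  linarith

end Conormal
end ConormalOscillation

open ConormalOscillation in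
theorem stmt_3_general (n N : ℕ) [NeZero n] (lam Lam : ℝ)
    (hlam : 0 < lam) (hLam : lam ≤ Lam) :
    ∃ c > 0, ∀ (x y : EuclideanSpace ℝ (Fin n)) (πx πy : Fin n → ℝ)
      (Ax Ay : Fin N → Fin N → Fin n → Fin n → ℝ)
      (Fx Fy ζx ζy Ux Uy : Fin n → Fin N → ℝ),
      x ≠ y →
      πx 0 = -1 → πy 0 = -1 →
      (∀ ξ : Fin n → Fin N → ℝ,
        lam * ∑ α, ∑ i, (ξ α i) ^ 2 ≤ ∑ i, ∑ j, ∑ α, ∑ β, Ax i j α β * ξ α i * ξ β j) →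
      (∀ ξ : Fin n → Fin N → ℝ,
        lam * ∑ α, ∑ i, (ξ α i) ^ 2 ≤ ∑ i, ∑ j, ∑ α, ∑ β, Ay i j α β * ξ α i * ξ β j) →
      (∀ i j α β, |Ax i j α β| ≤ Lam) →
      (∀ i j α β, |Ay i j α β| ≤ Lam) →
      (∀ i, Ux 0 i = ∑ α, πx α * ((∑ j, ∑ β, Ax i j α β * ζx β j) - Fx α i)) →
      (∀ i, Uy 0 i = ∑ α, πy α * ((∑ j, ∑ β, Ay i j α β * ζy β j) - Fy α i)) →
      (∀ i, ∀ β : Fin n, β ≠ 0 → Ux β i = ζx β i + πx β * ζx 0 i) →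
      (∀ i, ∀ β : Fin n, β ≠ 0 → Uy β i = ζy β i + πy β * ζy 0 i) →
      Real.sqrt (∑ α, ∑ i, (ζx α i - ζy α i) ^ 2) ≤
        c * (Real.sqrt (∑ α, ∑ i, (Uy α i - Ux α i) ^ 2) +
              Real.sqrt (∑ α, ∑ i, (Fy α i - Fx α i) ^ 2))
        + c * (Real.sqrt (∑ α, ∑ i, (Ux α i) ^ 2) + Real.sqrt (∑ α, ∑ i, (Fx α i) ^ 2)) *
            (Real.sqrt (∑ α, (πx α - πy α) ^ 2) + Real.sqrt (∑ α, (πx α - πy α) ^ 2) ^ 2)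
        + c * (Real.sqrt (∑ α, ∑ i, (Ux α i) ^ 2) + Real.sqrt (∑ α, ∑ i, (Fx α i) ^ 2)) *
            (∑ i, ∑ j, ∑ α, ∑ β, |Ay i j α β - Ax i j α β|) := by
  set C : ℝ := Fintype.card (Fin N) ^ 2 * Fintype.card (Fin n) ^ 2 * Lam
  have hC : 0 ≤ C := mul_nonneg (by positivity) (hlam.le.trans hLam)
  set c := ((lam + 4 * (1 + C)) / lam) ^ 2
  refine ⟨c, by positivity, ?_⟩
  intro _ _ πx πy Ax Ay Fx Fy ζx ζy Ux Uy _ hπx hπy hAx hAy hAxΛ hAyΛ hUx₀ hUy₀ hUx hUy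
  have key := frob_sub_le_of_elliptic hlam hAx hAy (coefL1_le_of_abs_le hAxΛ)
    (coefL1_le_of_abs_le hAyΛ) hπx hπy (eq_conormalField hUx₀ hUx) (eq_conormalField hUy₀ hUy)
  rw [frob_sub_comm ζy ζx, l2_sub_comm πy πx] at key
  change frob (ζx - ζy) ≤ c * (frob (Uy - Ux) + frob (Fy - Fx))
    + c * (frob Ux + frob Fx) * (l2 (πx - πy) + l2 (πx - πy) ^ 2)
    + c * (frob Ux + frob Fx) * coefL1 (Ay - Ax)
  linarith [mul_nonneg (mul_nonneg (by positivity : 0 ≤ c) (add_nonneg (frob_nonneg Ux)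
    (frob_nonneg Fx))) (sq_nonneg (l2 (πx - πy)))]

/-- Oscillation of `ζ` at two points is controlled by the oscillations of the conormal
quantities `U`, the data `F`, the direction `π` (first component `-1`), and the
coefficients `A`; `c = c(n, N, λ, Λ)`. -/
theorem stmt_3 (n N : ℕ) [NeZero n] [NeZero N] (lam Lam : ℝ)
    (hlam : 0 < lam) (hLam : lam ≤ Lam) :
    ∃ c > 0, ∀ (x y : EuclideanSpace ℝ (Fin n)) (πx πy : Fin n → ℝ)
      (Ax Ay : Fin N → Fin N → Fin n → Fin n → ℝ)
      (Fx Fy ζx ζy Ux Uy : Fin n → Fin N → ℝ),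
      x ≠ y →
      πx 0 = -1 → πy 0 = -1 →
      (∀ ξ : Fin n → Fin N → ℝ,
        lam * ∑ α, ∑ i, (ξ α i) ^ 2 ≤ ∑ i, ∑ j, ∑ α, ∑ β, Ax i j α β * ξ α i * ξ β j) →
      (∀ ξ : Fin n → Fin N → ℝ,
        lam * ∑ α, ∑ i, (ξ α i) ^ 2 ≤ ∑ i, ∑ j, ∑ α, ∑ β, Ay i j α β * ξ α i * ξ β j) →
      (∀ i j α β, |Ax i j α β| ≤ Lam) →
      (∀ i j α β, |Ay i j α β| ≤ Lam) →
      (∀ i, Ux 0 i = ∑ α, πx α * ((∑ j, ∑ β, Ax i j α β * ζx β j) - Fx α i)) →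
      (∀ i, Uy 0 i = ∑ α, πy α * ((∑ j, ∑ β, Ay i j α β * ζy β j) - Fy α i)) →
      (∀ i, ∀ β : Fin n, β ≠ 0 → Ux β i = ζx β i + πx β * ζx 0 i) →
      (∀ i, ∀ β : Fin n, β ≠ 0 → Uy β i = ζy β i + πy β * ζy 0 i) →
      Real.sqrt (∑ α, ∑ i, (ζx α i - ζy α i) ^ 2) ≤
        c * (Real.sqrt (∑ α, ∑ i, (Uy α i - Ux α i) ^ 2) +
              Real.sqrt (∑ α, ∑ i, (Fy α i - Fx α i) ^ 2))
        + c * (Real.sqrt (∑ α, ∑ i, (Ux α i) ^ 2) + Real.sqrt (∑ α, ∑ i, (Fx α i) ^ 2)) *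
            (Real.sqrt (∑ α, (πx α - πy α) ^ 2) + Real.sqrt (∑ α, (πx α - πy α) ^ 2) ^ 2)
        + c * (Real.sqrt (∑ α, ∑ i, (Ux α i) ^ 2) + Real.sqrt (∑ α, ∑ i, (Fx α i) ^ 2)) *
            (∑ i, ∑ j, ∑ α, ∑ β, |Ay i j α β - Ax i j α β|) :=
  stmt_3_general n N lam Lam hlam hLam
end

section
/- Let $(Q_{2r}, \{\varphi_k : k \in K_+\})$ be a composite cube, and suppose for some constants $\kappa > 0$, $R > 0$, $\mu \in (0, 1/4]$ that $|D\varphi_l(x') - D\varphi_k(x')| \le \kappa(|\varphi_l(x') - \varphi_k(x')|/R)^{2\mu}$ for all $x' \in Q'_{2r}$ and $k, l \in K_+$, and $|D\varphi_k(x') - D\varphi_k(y')| \le \kappa(|x'-y'|/R)^{2\mu}$ for all $x', y' \in Q'_{2r}$ and $k \in K_+$. Then for each $k \in K$ the derivative of the naturally induced flow $\pi'$ satisfies $|\pi'(y) - \pi'(z)| \le c\kappa(|y-z|/R)^{2\mu}$ for all $y, z \in \overline{Q_{2r}^k} \cap Q_{2r}$, where $c$ depends only on $n$, $\sup_k\|D\varphi_k\|_\infty$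 and $|K|$. -/
open MeasureTheory

noncomputable section

/-- Euclidean space `ℝ^m` (tangential variables). -/
abbrev Em (m : ℕ) := EuclideanSpace ℝ (Fin m)

/-- Points `x = (x¹, xʹ)` of `ℝ^n = ℝ × ℝ^{n-1}`. -/
abbrev X (m : ℕ) := ℝ × Em m

/-- Open cube of half-side `s` centered at `z` in `ℝ × ℝ^m`. -/
def QX (m : ℕ) (z : X m) (s : ℝ) : Set (X m) :=
  {p | |p.1 - z.1| < s ∧ ∀ i, |p.2 i - z.2 i| < s}

/-- Coordinate directions in `ℝ × ℝ^m`; direction `0` is the `x¹` direction. -/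
def dirX (m : ℕ) : Fin (m + 1) → X m :=
  Fin.cons ((1 : ℝ), 0) (fun i => ((0 : ℝ), EuclideanSpace.single i 1))

/-- Smooth test function compactly supported in `Ω`. -/
def IsTestX (m : ℕ) (Ω : Set (X m)) (φ : X m → ℝ) : Prop :=
  ContDiff ℝ (⊤ : ℕ∞) φ ∧ HasCompactSupport φ ∧ tsupport φ ⊆ Ω

/-- Partial derivative in direction `α`. -/
def pdX (m : ℕ) (α : Fin (m + 1)) (φ : X m → ℝ) (x : X m) : ℝ :=
  fderiv ℝ φ x (dirX m α)

/-- `g` is the weak `α`-derivative of `f` on `Ω`. -/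
def IsWeakDerivX (m : ℕ) (Ω : Set (X m)) (α : Fin (m + 1)) (f g : X m → ℝ) : Prop :=
  ∀ φ : X m → ℝ, IsTestX m Ω φ →
    ∫ x in Ω, f x * pdX m α φ x = - ∫ x in Ω, g x * φ x
/-- Open cube of half-side `s` centered at `z` in the tangential variables `ℝ^m`. -/
def Qc (m : ℕ) (z : Em m) (s : ℝ) : Set (Em m) := {x' | ∀ i, |x' i - z i| < s}

private lemma qc_convex (m : ℕ) (z : Em m) (s : ℝ) : Convex ℝ (Qc m z s) := by
  intro a ha b hb ta tb hta htb hsum i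
  have ha' := ha i
  have hb' := hb i
  have h1 : (ta • a + tb • b) i - z i = ta * (a i - z i) + tb * (b i - z i) := by
    have : (ta • a + tb • b) i = ta * a i + tb * b i := rfl
    rw [this]; linear_combination (z i) * hsum
  have h2 : |ta * (a i - z i) + tb * (b i - z i)| ≤ ta * |a i - z i| + tb * |b i - z i| := by
    refine (abs_add_le _ _).trans ?_
    simp [abs_mul, abs_of_nonneg hta, abs_of_nonneg htb]
  show |(ta • a + tb • b) i - z i| < s
  rw [h1]
  rcases hta.lt_or_eq with h | h
  · nlinarith [abs_nonneg (b i - z i)]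
  · nlinarith [abs_nonneg (a i - z i)]

private lemma min_rpow_le (C a δ e : ℝ) (hC : 1 ≤ C) (ha : 0 ≤ a) (hδ : 0 < δ)
    (he : 0 < e) (he1 : e ≤ 1) : min 1 (C * a / δ) * δ ^ e ≤ C * a ^ e := by
  have hCe : C ^ e ≤ C := by
    calc C ^ e ≤ C ^ (1 : ℝ) := Real.rpow_le_rpow_of_exponent_le hC he1
      _ = C := Real.rpow_one C
  have hae : (0:ℝ) ≤ a ^ e := Real.rpow_nonneg ha e
  rcases le_or_gt δ (C * a) with h | h
  · calc min 1 (C * a / δ) * δ ^ e ≤ 1 * δ ^ e :=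
          mul_le_mul_of_nonneg_right (min_le_left _ _) (Real.rpow_nonneg hδ.le e)
      _ = δ ^ e := one_mul _
      _ ≤ (C * a) ^ e := Real.rpow_le_rpow hδ.le h he.le
      _ = C ^ e * a ^ e := Real.mul_rpow (by linarith) ha
      _ ≤ C * a ^ e := by nlinarith
  · have hCa : 0 ≤ C * a := mul_nonneg (by linarith) ha
    rcases hCa.eq_or_lt with h0 | hpos
    · have hmin : min 1 (C * a / δ) = 0 := by rw [← h0]; simp
      rw [hmin, zero_mul]; positivity
    · calc min 1 (C * a / δ) * δ ^ e ≤ (C * a / δ) * δ ^ e :=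
            mul_le_mul_of_nonneg_right (min_le_right _ _) (Real.rpow_nonneg hδ.le e)
        _ = (C * a) * δ ^ (e - 1) := by
            rw [Real.rpow_sub hδ, Real.rpow_one]; ring
        _ ≤ (C * a) * (C * a) ^ (e - 1) := by
            exact mul_le_mul_of_nonneg_left
              (Real.rpow_le_rpow_of_nonpos hpos h.le (by linarith)) hCa
        _ = (C * a) ^ e := by
            have h2 : (C * a) ^ e = (C * a) ^ (1:ℝ) * (C * a) ^ (e - 1) := by
              rw [← Real.rpow_add hpos]; norm_num
            rw [h2, Real.rpow_one]
        _ = C ^ e * a ^ e := Real.mul_rpow (by linarith) ha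
        _ ≤ C * a ^ e := by nlinarith

private lemma rpow_div_le_mul (X W C R e : ℝ) (hX : 0 ≤ X) (hXW : X ≤ C * W) (hC : 1 ≤ C)
    (hW : 0 ≤ W) (hR : 0 < R) (he : 0 < e) (he1 : e ≤ 1) :
    (X / R) ^ e ≤ C * (W / R) ^ e := by
  have hCe : C ^ e ≤ C := by
    calc C ^ e ≤ C ^ (1 : ℝ) := Real.rpow_le_rpow_of_exponent_le hC he1
      _ = C := Real.rpow_one C
  have h1 : (X / R) ^ e ≤ (C * (W / R)) ^ e := by
    apply Real.rpow_le_rpow (by positivity) _ he.le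
    rw [div_le_iff₀ hR] at *
    calc X ≤ C * W := hXW
      _ = C * (W / R) * R := by field_simp
  calc (X / R) ^ e ≤ (C * (W / R)) ^ e := h1
    _ = C ^ e * (W / R) ^ e := Real.mul_rpow (by linarith) (by positivity)
    _ ≤ C * (W / R) ^ e := by nlinarith [Real.rpow_nonneg (show (0:ℝ) ≤ W/R by positivity) e]

set_option maxHeartbeats 1000000 in
/-- Single-layer Hölder estimate for the derivative of the naturally induced flow `π'`
in a composite cube. -/
theorem stmt_9 (m L : ℕ) (S : ℝ) :
    ∃ c > 0, ∀ (r R κ μ : ℝ)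
      (φ : Fin (L + 1) → Em m → ℝ) (Dφ : Fin (L + 1) → Em m → Em m)
      (πt : X m → Em m),
      0 < r → 0 < R → 0 < κ → 0 < μ → μ ≤ 1 / 4 →
      (∀ k x', HasGradientAt (φ k) (Dφ k x') x') →
      (∀ k : Fin L, ∀ x' ∈ Qc m 0 (2 * r), φ k.castSucc x' ≤ φ k.succ x') →
      (∀ k l : Fin (L + 1), ∀ x' ∈ Qc m 0 (2 * r),
        ‖Dφ l x' - Dφ k x'‖ ≤ κ * (|φ l x' - φ k x'| / R) ^ (2 * μ)) →
      (∀ k : Fin (L + 1), ∀ x' ∈ Qc m 0 (2 * r), ∀ y' ∈ Qc m 0 (2 * r),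
        ‖Dφ k x' - Dφ k y'‖ ≤ κ * (‖x' - y'‖ / R) ^ (2 * μ)) →
      (∀ k : Fin (L + 1), ∀ x' ∈ Qc m 0 (2 * r), ‖Dφ k x'‖ ≤ S) →
      -- definition of π' on (the closure of) each layer
      (∀ k : Fin L, ∀ p ∈ QX m 0 (2 * r),
        φ k.castSucc p.2 ≤ p.1 → p.1 ≤ φ k.succ p.2 →
        (φ k.castSucc p.2 < φ k.succ p.2 →
          πt p = ((p.1 - φ k.castSucc p.2) / (φ k.succ p.2 - φ k.castSucc p.2)) •
                    Dφ k.succ p.2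
            + (1 - (p.1 - φ k.castSucc p.2) / (φ k.succ p.2 - φ k.castSucc p.2)) •
                Dφ k.castSucc p.2) ∧
        (φ k.castSucc p.2 = φ k.succ p.2 → πt p = Dφ k.castSucc p.2)) →
      ∀ k : Fin L, ∀ y ∈ QX m 0 (2 * r), ∀ z ∈ QX m 0 (2 * r),
        φ k.castSucc y.2 ≤ y.1 → y.1 ≤ φ k.succ y.2 →
        φ k.castSucc z.2 ≤ z.1 → z.1 ≤ φ k.succ z.2 →
        ‖πt y - πt z‖ ≤ c * κ * (‖y - z‖ / R) ^ (2 * μ) := by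
  refine ⟨2 + 3 * max S 0, by positivity, ?_⟩
  intro r R κ μ φ Dφ πt hr hR hκ hμ hμ4 hgrad hord hHol1 hHol2 hS hπ k y hy z hz hfy hgy hfz hgz
  set S' := max S 0 with hS'def
  have hS'0 : 0 ≤ S' := le_max_right _ _
  set C : ℝ := 1 + 3 * S' with hCdef
  have hC1 : (1:ℝ) ≤ C := by rw [hCdef]; linarith
  set e := 2 * μ with hedef
  have he : 0 < e := by positivity
  have he1 : e ≤ 1 := by rw [hedef]; linarith
  have hy2 : y.2 ∈ Qc m 0 (2 * r) := fun i => by simpa using hy.2 i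
  have hz2 : z.2 ∈ Qc m 0 (2 * r) := fun i => by simpa using hz.2 i
  set a := ‖y - z‖ / R with hadef
  have ha : 0 ≤ a := by positivity
  have hae : 0 ≤ a ^ e := Real.rpow_nonneg ha e
  -- Lipschitz bound from the gradient bound
  have lip : ∀ j : Fin (L+1), ∀ p ∈ Qc m 0 (2*r), ∀ q ∈ Qc m 0 (2*r),
      |φ j p - φ j q| ≤ S' * ‖p - q‖ := by
    intro j p hp q hq
    have hb : ∀ x ∈ Qc m 0 (2*r),
        ‖(InnerProductSpace.toDual ℝ (Em m)) (Dφ j x)‖ ≤ S' := by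
      intro x hx
      rw [LinearIsometryEquiv.norm_map]
      exact (hS j x hx).trans (le_max_left S 0)
    have hmv := (qc_convex m 0 (2*r)).norm_image_sub_le_of_norm_hasFDerivWithin_le
      (fun x _ => (hgrad j x).hasFDerivAt.hasFDerivWithinAt) hb hq hp
    simpa [Real.norm_eq_abs] using hmv
  have hsub2 : ‖y.2 - z.2‖ ≤ ‖y - z‖ := by
    have h : y.2 - z.2 = (y - z).2 := rfl
    rw [h]; exact norm_snd_le _
  have hsub1 : |y.1 - z.1| ≤ ‖y - z‖ := by
    have h : y.1 - z.1 = (y - z).1 := rfl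
    rw [← Real.norm_eq_abs, h]; exact norm_fst_le _
  -- tangential Hölder bound
  have htan : ∀ j : Fin (L+1), ‖Dφ j y.2 - Dφ j z.2‖ ≤ κ * a ^ e := by
    intro j
    refine (hHol2 j y.2 hy2 z.2 hz2).trans ?_
    rw [hadef]
    gcongr
  -- vertical Hölder bound
  have hvert : ∀ p ∈ Qc m 0 (2*r),
      ‖Dφ k.succ p - Dφ k.castSucc p‖ ≤
        κ * ((φ k.succ p - φ k.castSucc p) / R) ^ e := by
    intro p hp
    have h := hHol1 k.castSucc k.succ p hp
    rwa [abs_of_nonneg (sub_nonneg.2 (hord k p hp))] at h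
  have hdy0 : 0 ≤ φ k.succ y.2 - φ k.castSucc y.2 := sub_nonneg.2 (hord k y.2 hy2)
  have hdz0 : 0 ≤ φ k.succ z.2 - φ k.castSucc z.2 := sub_nonneg.2 (hord k z.2 hz2)
  have hlipy : |φ k.castSucc y.2 - φ k.castSucc z.2| ≤ S' * ‖y - z‖ := by
    have h := lip k.castSucc y.2 hy2 z.2 hz2
    nlinarith [mul_le_mul_of_nonneg_left hsub2 hS'0]
  have hlipsy : |φ k.succ y.2 - φ k.succ z.2| ≤ S' * ‖y - z‖ := by
    have h := lip k.succ y.2 hy2 z.2 hz2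
    nlinarith [mul_le_mul_of_nonneg_left hsub2 hS'0]
  have hdiff : |(φ k.succ z.2 - φ k.castSucc z.2) - (φ k.succ y.2 - φ k.castSucc y.2)| ≤
      2 * S' * ‖y - z‖ := by
    have h1 := abs_sub_abs_le_abs_sub (0:ℝ) (0:ℝ)
    have e1 : (φ k.succ z.2 - φ k.castSucc z.2) - (φ k.succ y.2 - φ k.castSucc y.2)
        = -(φ k.succ y.2 - φ k.succ z.2) + (φ k.castSucc y.2 - φ k.castSucc z.2) := by ring
    rw [e1]
    refine (abs_add_le _ _).trans ?_
    rw [abs_neg]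
    linarith
  -- bound for the vertical difference term at z, given a width bound
  have hWbound : ∀ W : ℝ, 0 ≤ W → W ≤ C * ‖y - z‖ → (W / R) ^ e ≤ C * a ^ e := by
    intro W hW0 hWC
    rw [hadef]
    exact rpow_div_le_mul W ‖y - z‖ C R e hW0 hWC hC1 (norm_nonneg _) hR he he1
  rcases hdy0.eq_or_lt with hy0 | hypos
  · -- degenerate layer at y
    have hfgy : φ k.castSucc y.2 = φ k.succ y.2 := by linarith
    have hπy : πt y = Dφ k.castSucc y.2 := (hπ k y hy hfy hgy).2 hfgy
    rcases hdz0.eq_or_lt with hz0 | hzpos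
    · have hfgz : φ k.castSucc z.2 = φ k.succ z.2 := by linarith
      have hπz : πt z = Dφ k.castSucc z.2 := (hπ k z hz hfz hgz).2 hfgz
      rw [hπy, hπz]
      have h := htan k.castSucc
      nlinarith [mul_nonneg hκ.le hae, mul_nonneg hS'0 (mul_nonneg hκ.le hae)]
    · have hπz := (hπ k z hz hfz hgz).1 (by linarith)
      set Tz := (z.1 - φ k.castSucc z.2) / (φ k.succ z.2 - φ k.castSucc z.2) with hTzdef
      have hTz0 : 0 ≤ Tz := div_nonneg (by linarith) (by linarith)
      have hTz1 : Tz ≤ 1 := (div_le_one (by linarith)).2 (by linarith)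
      have hid : πt y - πt z = (Dφ k.castSucc y.2 - Dφ k.castSucc z.2)
          - Tz • (Dφ k.succ z.2 - Dφ k.castSucc z.2) := by
        rw [hπy, hπz]; module
      have hwz : (φ k.succ z.2 - φ k.castSucc z.2) ≤ C * ‖y - z‖ := by
        have h2 := le_abs_self
          ((φ k.succ z.2 - φ k.castSucc z.2) - (φ k.succ y.2 - φ k.castSucc y.2))
        rw [hCdef]
        nlinarith [norm_nonneg (y - z), mul_nonneg hS'0 (norm_nonneg (y - z))]
      have h3 : ‖Dφ k.succ z.2 - Dφ k.castSucc z.2‖ ≤ κ * (C * a ^ e) :=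
        (hvert z.2 hz2).trans (mul_le_mul_of_nonneg_left
          (hWbound _ (by linarith) hwz) hκ.le)
      calc ‖πt y - πt z‖
          ≤ ‖Dφ k.castSucc y.2 - Dφ k.castSucc z.2‖
            + |Tz| * ‖Dφ k.succ z.2 - Dφ k.castSucc z.2‖ := by
            rw [hid]
            refine (norm_sub_le _ _).trans ?_
            rw [norm_smul, Real.norm_eq_abs]
        _ ≤ κ * a ^ e + 1 * (κ * (C * a ^ e)) := by
            refine add_le_add (htan _) ?_
            rw [abs_of_nonneg hTz0]
            exact mul_le_mul hTz1 h3 (norm_nonneg _) (by norm_num)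
        _ ≤ (2 + 3 * S') * κ * a ^ e := by rw [hCdef]; nlinarith
  · rcases hdz0.eq_or_lt with hz0 | hzpos
    · -- degenerate layer at z
      have hfgz : φ k.castSucc z.2 = φ k.succ z.2 := by linarith
      have hπz : πt z = Dφ k.castSucc z.2 := (hπ k z hz hfz hgz).2 hfgz
      have hπy := (hπ k y hy hfy hgy).1 (by linarith)
      set Ty := (y.1 - φ k.castSucc y.2) / (φ k.succ y.2 - φ k.castSucc y.2) with hTydef
      have hTy0 : 0 ≤ Ty := div_nonneg (by linarith) (by linarith)
      have hTy1 : Ty ≤ 1 := (div_le_one (by linarith)).2 (by linarith)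
      have hid : πt y - πt z = (Dφ k.castSucc y.2 - Dφ k.castSucc z.2)
          + Ty • (Dφ k.succ y.2 - Dφ k.castSucc y.2) := by
        rw [hπy, hπz]; module
      have hwy : (φ k.succ y.2 - φ k.castSucc y.2) ≤ C * ‖y - z‖ := by
        have h2 := neg_le_abs
          ((φ k.succ z.2 - φ k.castSucc z.2) - (φ k.succ y.2 - φ k.castSucc y.2))
        rw [hCdef]
        nlinarith [norm_nonneg (y - z), mul_nonneg hS'0 (norm_nonneg (y - z))]
      have h3 : ‖Dφ k.succ y.2 - Dφ k.castSucc y.2‖ ≤ κ * (C * a ^ e) :=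
        (hvert y.2 hy2).trans (mul_le_mul_of_nonneg_left
          (hWbound _ (by linarith) hwy) hκ.le)
      calc ‖πt y - πt z‖
          ≤ ‖Dφ k.castSucc y.2 - Dφ k.castSucc z.2‖
            + |Ty| * ‖Dφ k.succ y.2 - Dφ k.castSucc y.2‖ := by
            rw [hid]
            refine (norm_add_le _ _).trans ?_
            rw [norm_smul, Real.norm_eq_abs]
        _ ≤ κ * a ^ e + 1 * (κ * (C * a ^ e)) := by
            refine add_le_add (htan _) ?_
            rw [abs_of_nonneg hTy0]
            exact mul_le_mul hTy1 h3 (norm_nonneg _) (by norm_num)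
        _ ≤ (2 + 3 * S') * κ * a ^ e := by rw [hCdef]; nlinarith
    · -- main case
      have hdyne : (φ k.succ y.2 - φ k.castSucc y.2) ≠ 0 := ne_of_gt hypos
      have hdzne : (φ k.succ z.2 - φ k.castSucc z.2) ≠ 0 := ne_of_gt hzpos
      have hπy := (hπ k y hy hfy hgy).1 (by linarith)
      have hπz := (hπ k z hz hfz hgz).1 (by linarith)
      set Ty := (y.1 - φ k.castSucc y.2) / (φ k.succ y.2 - φ k.castSucc y.2) with hTydef
      set Tz := (z.1 - φ k.castSucc z.2) / (φ k.succ z.2 - φ k.castSucc z.2) with hTzdef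
      have hTy0 : 0 ≤ Ty := div_nonneg (by linarith) (by linarith)
      have hTy1 : Ty ≤ 1 := (div_le_one (by linarith)).2 (by linarith)
      have hTz0 : 0 ≤ Tz := div_nonneg (by linarith) (by linarith)
      have hTz1 : Tz ≤ 1 := (div_le_one (by linarith)).2 (by linarith)
      have hid : πt y - πt z = Ty • (Dφ k.succ y.2 - Dφ k.succ z.2)
          + (1 - Ty) • (Dφ k.castSucc y.2 - Dφ k.castSucc z.2)
          + (Ty - Tz) • (Dφ k.succ z.2 - Dφ k.castSucc z.2) := by
        rw [hπy, hπz]; module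
      -- bound on |Ty - Tz|
      have hkey : |Ty - Tz| * (φ k.succ z.2 - φ k.castSucc z.2) ≤ C * ‖y - z‖ := by
        have e0 : |Ty - Tz| * (φ k.succ z.2 - φ k.castSucc z.2)
            = |(Ty - Tz) * (φ k.succ z.2 - φ k.castSucc z.2)| := by
          rw [abs_mul, abs_of_pos hzpos]
        rw [e0]
        have e1 : (Ty - Tz) * (φ k.succ z.2 - φ k.castSucc z.2)
            = ((y.1 - φ k.castSucc y.2) - (z.1 - φ k.castSucc z.2))
              + Ty * ((φ k.succ z.2 - φ k.castSucc z.2) - (φ k.succ y.2 - φ k.castSucc y.2)) := by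
          rw [hTydef, hTzdef]
          field_simp
          ring
        rw [e1]
        refine (abs_add_le _ _).trans ?_
        have h1 : |(y.1 - φ k.castSucc y.2) - (z.1 - φ k.castSucc z.2)|
            ≤ (1 + S') * ‖y - z‖ := by
          have e2 : (y.1 - φ k.castSucc y.2) - (z.1 - φ k.castSucc z.2)
              = (y.1 - z.1) + -(φ k.castSucc y.2 - φ k.castSucc z.2) := by ring
          rw [e2]
          refine (abs_add_le _ _).trans ?_
          rw [abs_neg]
          nlinarith
        have h2 : |Ty * ((φ k.succ z.2 - φ k.castSucc z.2) - (φ k.succ y.2 - φ k.castSucc y.2))|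
            ≤ 2 * S' * ‖y - z‖ := by
          rw [abs_mul, abs_of_nonneg hTy0]
          nlinarith [abs_nonneg ((φ k.succ z.2 - φ k.castSucc z.2) - (φ k.succ y.2 - φ k.castSucc y.2))]
        rw [hCdef]
        nlinarith
      have hmin : |Ty - Tz| ≤ min 1 (C * ‖y - z‖ / (φ k.succ z.2 - φ k.castSucc z.2)) := by
        refine le_min (abs_le.2 ⟨by linarith, by linarith⟩) ?_
        rw [le_div_iff₀ hzpos]
        exact hkey
      have hthird : |Ty - Tz| * ‖Dφ k.succ z.2 - Dφ k.castSucc z.2‖ ≤ κ * (C * a ^ e) := by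
        have hδ : 0 < (φ k.succ z.2 - φ k.castSucc z.2) / R := by positivity
        have heq : C * ‖y - z‖ / (φ k.succ z.2 - φ k.castSucc z.2)
            = C * a / ((φ k.succ z.2 - φ k.castSucc z.2) / R) := by
          rw [hadef]; field_simp
        calc |Ty - Tz| * ‖Dφ k.succ z.2 - Dφ k.castSucc z.2‖
            ≤ min 1 (C * ‖y - z‖ / (φ k.succ z.2 - φ k.castSucc z.2))
              * (κ * ((φ k.succ z.2 - φ k.castSucc z.2) / R) ^ e) := by
              refine mul_le_mul hmin (hvert z.2 hz2) (norm_nonneg _) ?_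
              exact le_min zero_le_one (by positivity)
          _ = κ * (min 1 (C * a / ((φ k.succ z.2 - φ k.castSucc z.2) / R))
              * ((φ k.succ z.2 - φ k.castSucc z.2) / R) ^ e) := by rw [heq]; ring
          _ ≤ κ * (C * a ^ e) := by
              refine mul_le_mul_of_nonneg_left ?_ hκ.le
              exact min_rpow_le C a _ e hC1 ha hδ he he1
      calc ‖πt y - πt z‖
          ≤ |Ty| * ‖Dφ k.succ y.2 - Dφ k.succ z.2‖
            + |1 - Ty| * ‖Dφ k.castSucc y.2 - Dφ k.castSucc z.2‖
            + |Ty - Tz| * ‖Dφ k.succ z.2 - Dφ k.castSucc z.2‖ := by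
            rw [hid]
            refine (norm_add_le _ _).trans ?_
            have := norm_add_le (Ty • (Dφ k.succ y.2 - Dφ k.succ z.2))
              ((1 - Ty) • (Dφ k.castSucc y.2 - Dφ k.castSucc z.2))
            simp only [norm_smul, Real.norm_eq_abs] at *
            linarith
        _ ≤ Ty * (κ * a ^ e) + (1 - Ty) * (κ * a ^ e) + κ * (C * a ^ e) := by
            refine add_le_add (add_le_add ?_ ?_) hthird
            · rw [abs_of_nonneg hTy0]
              exact mul_le_mul_of_nonneg_left (htan _) hTy0
            · rw [abs_of_nonneg (by linarith : (0:ℝ) ≤ 1 - Ty)]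
              exact mul_le_mul_of_nonneg_left (htan _) (by linarith)
        _ ≤ (2 + 3 * S') * κ * a ^ e := by rw [hCdef]; nlinarith
end
end

section
/- Let $(Q_{2r}, \{\varphi_k : k \in K_+\})$ be a composite cube satisfying, for constants $\kappa > 0$, $R > 0$, $\mu \in (0,1/4]$: $|D\varphi_l(x') - D\varphi_k(x')| \le \kappa(|\varphi_l(x') - \varphi_k(x')|/R)^{2\mu}$ for all $x' \in Q'_{2r}$, $k, l \in K_+$, and $|D\varphi_k(x') - D\varphi_k(y')| \le \kappa(|x'-y'|/R)^{2\mu}$ for all $x', y' \in Q'_{2r}$, $k \in K_+$. Then the derivative of the naturally induced flow $\pi'$ is globally Hölder continuous on the whole cube: $|\pi'(y) - \pi'(z)| \le c\kappa(|y-z|/R)^{2\mu}$ for all $y, z \in Q_{2r}$, where $c$ depends on $n$, $\sup_k \|D\varphi_k\|_\infty$ and the number of elements of $K$. -/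
open MeasureTheory

noncomputable section

private lemma rpow_subadd {p : ℝ} (a b : ℝ) (ha : 0 ≤ a) (hb : 0 ≤ b)
    (hp : 0 ≤ p) (hp1 : p ≤ 1) : (a + b) ^ p ≤ a ^ p + b ^ p := by
  lift a to NNReal using ha
  lift b to NNReal using hb
  exact_mod_cast NNReal.rpow_add_le_add_rpow a b hp hp1

private lemma rpow_helper {β a h e R κ : ℝ} (hβ0 : 0 < β) (hβ1 : β ≤ 1) (hR : 0 < R)
    (hκ : 0 ≤ κ) (hh : 0 < h) (ha : 0 ≤ a) (hah : a ≤ h) (hae : a ≤ e) :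
    a / h * (κ * (h / R) ^ β) ≤ κ * (e / R) ^ β := by
  have he0 : 0 ≤ e := ha.trans hae
  rcases le_or_gt h e with hhe | heh
  · have h1 : a / h ≤ 1 := div_le_one_of_le₀ hah hh.le
    have h2 : (h / R) ^ β ≤ (e / R) ^ β :=
      Real.rpow_le_rpow (by positivity) (by gcongr) hβ0.le
    have := mul_le_mul h1 (mul_le_mul_of_nonneg_left h2 hκ) (by positivity) zero_le_one
    simpa using this
  · rcases eq_or_lt_of_le he0 with he | he
    · have ha0 : a = 0 := le_antisymm (by rw [← he] at hae; exact hae) ha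
      rw [ha0, zero_div, zero_mul]
      exact mul_nonneg hκ (Real.rpow_nonneg (by positivity) _)
    · have key : a / h * h ^ β ≤ e ^ β := by
        have h1 : h ^ β = h ^ (β - 1) * h := by
          rw [← Real.rpow_add_one hh.ne' (β - 1)]
          ring_nf
        rw [h1]
        have e1 : a / h * (h ^ (β - 1) * h) = a * h ^ (β - 1) := by
          field_simp
        rw [e1]
        have h2 : h ^ (β - 1) ≤ e ^ (β - 1) :=
          Real.rpow_le_rpow_of_nonpos he heh.le (by linarith)
        calc a * h ^ (β - 1) ≤ e * e ^ (β - 1) :=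
              mul_le_mul hae h2 (Real.rpow_nonneg hh.le _) he0
          _ = e ^ β := by
              rw [mul_comm, ← Real.rpow_add_one he.ne']
              ring_nf
      calc a / h * (κ * (h / R) ^ β) = κ * (a / h * h ^ β) / R ^ β := by
            rw [Real.div_rpow hh.le hR.le]; ring
        _ ≤ κ * e ^ β / R ^ β := by gcongr
        _ = κ * (e / R) ^ β := by rw [Real.div_rpow he0 hR.le]; ring

private lemma rpow_const_mul {β e R C : ℝ} (hC : 1 ≤ C) (he : 0 ≤ e) (hR : 0 < R)
    (hβ1 : β ≤ 1) : (C * e / R) ^ β ≤ C * (e / R) ^ β := by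
  have h1 : C * e / R = C * (e / R) := by ring
  rw [h1, Real.mul_rpow (by linarith) (by positivity)]
  refine mul_le_mul_of_nonneg_right ?_ (Real.rpow_nonneg (by positivity) _)
  calc C ^ β ≤ C ^ (1 : ℝ) := Real.rpow_le_rpow_of_exponent_le hC hβ1
    _ = C := Real.rpow_one C


set_option maxHeartbeats 2000000

/-- Global Hölder continuity of the derivative of the naturally induced flow `π'`
across all interfaces of a composite cube. -/
theorem stmt_10 (m L : ℕ) (S : ℝ) :
    ∃ c > 0, ∀ (r R κ μ : ℝ)
      (φ : Fin (L + 1) → Em m → ℝ) (Dφ : Fin (L + 1) → Em m → Em m)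
      (πt : X m → Em m),
      0 < r → 0 < R → 0 < κ → 0 < μ → μ ≤ 1 / 4 →
      (∀ k x', HasGradientAt (φ k) (Dφ k x') x') →
      (∀ k : Fin L, ∀ x' ∈ Qc m 0 (2 * r), φ k.castSucc x' ≤ φ k.succ x') →
      -- the layers partition the cube
      (∀ p ∈ QX m 0 (2 * r), ∃ k : Fin L,
        φ k.castSucc p.2 < p.1 ∧ p.1 ≤ φ k.succ p.2) →
      (∀ k l : Fin (L + 1), ∀ x' ∈ Qc m 0 (2 * r),
        ‖Dφ l x' - Dφ k x'‖ ≤ κ * (|φ l x' - φ k x'| / R) ^ (2 * μ)) →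
      (∀ k : Fin (L + 1), ∀ x' ∈ Qc m 0 (2 * r), ∀ y' ∈ Qc m 0 (2 * r),
        ‖Dφ k x' - Dφ k y'‖ ≤ κ * (‖x' - y'‖ / R) ^ (2 * μ)) →
      (∀ k : Fin (L + 1), ∀ x' ∈ Qc m 0 (2 * r), ‖Dφ k x'‖ ≤ S) →
      -- layerwise definition of π'
      (∀ k : Fin L, ∀ p ∈ QX m 0 (2 * r),
        φ k.castSucc p.2 < p.1 → p.1 ≤ φ k.succ p.2 →
          πt p = ((p.1 - φ k.castSucc p.2) / (φ k.succ p.2 - φ k.castSucc p.2)) •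
                    Dφ k.succ p.2
            + (1 - (p.1 - φ k.castSucc p.2) / (φ k.succ p.2 - φ k.castSucc p.2)) •
                Dφ k.castSucc p.2) →
      ∀ y ∈ QX m 0 (2 * r), ∀ z ∈ QX m 0 (2 * r),
        ‖πt y - πt z‖ ≤ c * κ * (‖y - z‖ / R) ^ (2 * μ) := by
  refine ⟨64 * (1 + |S|), by positivity, ?_⟩
  intro r R κ μ φ Dφ πt hr hR hκ hμ hμ4 hgrad hord hpart hpair hhold hS hlayer y hy z hz
  set β := 2 * μ with hβ
  have hβ0 : 0 < β := by positivity
  have hβ1 : β ≤ 1 := by rw [hβ]; linarith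
  have h0Qc : (0 : Em m) ∈ Qc m 0 (2 * r) := by
    simp only [Qc, Set.mem_setOf_eq]
    intro i
    simp only [PiLp.zero_apply, sub_zero, abs_zero]
    positivity
  have hS0 : 0 ≤ S := (norm_nonneg _).trans (hS 0 0 h0Qc)
  rw [abs_of_nonneg hS0]
  set C : ℝ := 1 + S with hCdef
  have hC1 : 1 ≤ C := by rw [hCdef]; linarith
  -- convexity auxiliary
  have cvx_aux : ∀ a b A B : ℝ, 0 ≤ a → 0 ≤ b → a + b = 1 →
      |A| < 2 * r → |B| < 2 * r → |a * A + b * B| < 2 * r := by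
    intro a b A B ha hb hab hA hB
    set M := max |A| |B| with hM
    have h1 : |a * A + b * B| ≤ a * |A| + b * |B| := by
      calc |a * A + b * B| ≤ |a * A| + |b * B| := abs_add_le _ _
        _ = a * |A| + b * |B| := by
            rw [abs_mul, abs_mul, abs_of_nonneg ha, abs_of_nonneg hb]
    have f1 : 0 ≤ a * (M - |A|) := mul_nonneg ha (sub_nonneg.mpr (le_max_left _ _))
    have f2 : 0 ≤ b * (M - |B|) := mul_nonneg hb (sub_nonneg.mpr (le_max_right _ _))
    have e : a * M + b * M = M := by rw [← add_mul, hab, one_mul]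
    have hMlt : M < 2 * r := max_lt hA hB
    nlinarith
  have hQcConv : Convex ℝ (Qc m 0 (2 * r)) := by
    intro u hu v hv a b ha hb hab
    simp only [Qc, Set.mem_setOf_eq] at hu hv ⊢
    intro i
    have e : (a • u + b • v) i - (0 : Em m) i = a * u i + b * v i := by simp
    rw [e]
    exact cvx_aux a b _ _ ha hb hab (by simpa using hu i) (by simpa using hv i)
  have hQXConv : Convex ℝ (QX m 0 (2 * r)) := by
    intro u hu v hv a b ha hb hab
    obtain ⟨hu1, hu2⟩ := hu
    obtain ⟨hv1, hv2⟩ := hv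
    refine ⟨?_, fun i => ?_⟩
    · have e : (a • u + b • v).1 - (0 : X m).1 = a * u.1 + b * v.1 := by simp
      rw [e]
      exact cvx_aux a b _ _ ha hb hab (by simpa using hu1) (by simpa using hv1)
    · have e : (a • u + b • v).2 i - (0 : X m).2 i = a * u.2 i + b * v.2 i := by simp
      rw [e]
      exact cvx_aux a b _ _ ha hb hab (by simpa using hu2 i) (by simpa using hv2 i)
  have hQX2Qc : ∀ p ∈ QX m 0 (2 * r), p.2 ∈ Qc m 0 (2 * r) := by
    intro p hp
    simp only [Qc, Set.mem_setOf_eq]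
    intro i
    simpa using hp.2 i
  -- Lipschitz estimate from the gradient bound
  have lip : ∀ (k : Fin (L + 1)), ∀ u ∈ Qc m 0 (2 * r), ∀ v ∈ Qc m 0 (2 * r),
      |φ k u - φ k v| ≤ S * ‖u - v‖ := by
    intro k u hu v hv
    have h := hQcConv.norm_image_sub_le_of_norm_hasFDerivWithin_le
      (f := φ k) (f' := fun x => (InnerProductSpace.toDual ℝ (Em m)) (Dφ k x))
      (fun x _ => ((hgrad k x).hasFDerivAt).hasFDerivWithinAt)
      (fun x hx => by
        rw [LinearIsometryEquiv.norm_map]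
        exact hS k x hx) hv hu
    simpa [Real.norm_eq_abs] using h
  have mono : ∀ u ∈ Qc m 0 (2 * r), ∀ j j' : Fin (L + 1), j ≤ j' → φ j u ≤ φ j' u := by
    intro u hu j j' hjj
    have hmono : Monotone (fun j : Fin (L + 1) => φ j u) :=
      Fin.monotone_iff_le_succ.mpr (fun i => hord i u hu)
    exact hmono hjj
  have hcont : ∀ k : Fin (L + 1), Continuous (φ k) :=
    fun k => Differentiable.continuous (fun x => (hgrad k x).differentiableAt)
  have rmono : ∀ x e : ℝ, 0 ≤ x → x ≤ e → κ * (x / R) ^ β ≤ κ * (e / R) ^ β := by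
    intro x e hx hxe
    have h : (x / R) ^ β ≤ (e / R) ^ β :=
      Real.rpow_le_rpow (by positivity) (by gcongr) hβ0.le
    exact mul_le_mul_of_nonneg_left h hκ.le
  -- the main two-point estimate, assuming the layer of `p` is below the layer of `q`
  have key : ∀ p ∈ QX m 0 (2 * r), ∀ q ∈ QX m 0 (2 * r), ∀ kp kq : Fin L,
      φ kp.castSucc p.2 < p.1 → p.1 ≤ φ kp.succ p.2 →
      φ kq.castSucc q.2 < q.1 → q.1 ≤ φ kq.succ q.2 → kp.val ≤ kq.val →
      ‖πt p - πt q‖ ≤ 64 * C * κ * (‖p - q‖ / R) ^ β := by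
    intro p hp q hq kp kq hp1 hp2 hq1 hq2 hk
    have hp' := hQX2Qc p hp
    have hq' := hQX2Qc q hq
    set d := ‖p - q‖ with hd
    have hd0 : 0 ≤ d := norm_nonneg _
    have hd1 : |p.1 - q.1| ≤ d := by
      have h := norm_fst_le (p - q)
      simpa [Real.norm_eq_abs] using h
    have hd2 : ‖p.2 - q.2‖ ≤ d := by
      have h := norm_snd_le (p - q)
      simpa using h
    have hπp := hlayer kp p hp hp1 hp2
    have hπq := hlayer kq q hq hq1 hq2
    set aP := p.1 - φ kp.castSucc p.2 with haP
    set hP := φ kp.succ p.2 - φ kp.castSucc p.2 with hhP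
    set aQ := q.1 - φ kq.castSucc q.2 with haQ
    set hQ := φ kq.succ q.2 - φ kq.castSucc q.2 with hhQ
    have haP0 : 0 < aP := sub_pos.mpr hp1
    have haPhP : aP ≤ hP := sub_le_sub_right hp2 _
    have hPpos : 0 < hP := lt_of_lt_of_le haP0 haPhP
    have haQ0 : 0 < aQ := sub_pos.mpr hq1
    have haQhQ : aQ ≤ hQ := sub_le_sub_right hq2 _
    have hQpos : 0 < hQ := lt_of_lt_of_le haQ0 haQhQ
    have cbound : ∀ K e : ℝ, 1 ≤ K → 0 ≤ e → e ≤ d →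
        κ * (K * e / R) ^ β ≤ K * (κ * (d / R) ^ β) := by
      intro K e hK he hed
      calc κ * (K * e / R) ^ β ≤ κ * (K * (e / R) ^ β) :=
            mul_le_mul_of_nonneg_left (rpow_const_mul hK he hR hβ1) hκ.le
        _ = K * (κ * (e / R) ^ β) := by ring
        _ ≤ K * (κ * (d / R) ^ β) :=
            mul_le_mul_of_nonneg_left (rmono _ _ he hed) (by linarith)
    have hZ0 : 0 ≤ κ * (d / R) ^ β := by positivity
    have hCd0 : 0 ≤ C * d := mul_nonneg (by linarith) hd0
    have hTpos : 0 ≤ aP / hP := by positivity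
    have hTle : aP / hP ≤ 1 := div_le_one_of_le₀ haPhP hPpos.le
    have hTQpos : 0 ≤ aQ / hQ := by positivity
    have hTQle : aQ / hQ ≤ 1 := div_le_one_of_le₀ haQhQ hQpos.le
    rcases eq_or_lt_of_le hk with hkeq | hklt
    · -- same layer
      have hEq : kq = kp := (Fin.val_injective hkeq).symm
      subst hEq
      have haD : |aP - aQ| ≤ C * d := by
        have e : aP - aQ = (p.1 - q.1) - (φ kq.castSucc p.2 - φ kq.castSucc q.2) := by
          rw [haP, haQ]; ring
        have h1 : |aP - aQ| ≤ |p.1 - q.1| + |φ kq.castSucc p.2 - φ kq.castSucc q.2| := by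
          rw [e]; exact abs_sub _ _
        have lipCS : |φ kq.castSucc p.2 - φ kq.castSucc q.2| ≤ S * d :=
          (lip kq.castSucc p.2 hp' q.2 hq').trans (mul_le_mul_of_nonneg_left hd2 hS0)
        have hCd : C * d = d + S * d := by rw [hCdef]; ring
        linarith
      have hhD : |hQ - hP| ≤ 2 * (C * d) := by
        have e : hP - hQ = (φ kq.succ p.2 - φ kq.succ q.2)
            - (φ kq.castSucc p.2 - φ kq.castSucc q.2) := by
          rw [hhP, hhQ]; ring
        have h1 : |hP - hQ| ≤ |φ kq.succ p.2 - φ kq.succ q.2|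
            + |φ kq.castSucc p.2 - φ kq.castSucc q.2| := by
          rw [e]; exact abs_sub _ _
        have lipS : |φ kq.succ p.2 - φ kq.succ q.2| ≤ S * d :=
          (lip kq.succ p.2 hp' q.2 hq').trans (mul_le_mul_of_nonneg_left hd2 hS0)
        have lipCS : |φ kq.castSucc p.2 - φ kq.castSucc q.2| ≤ S * d :=
          (lip kq.castSucc p.2 hp' q.2 hq').trans (mul_le_mul_of_nonneg_left hd2 hS0)
        have hCd : C * d = d + S * d := by rw [hCdef]; ring
        rw [abs_sub_comm]
        linarith
      have hTT : |aP / hP - aQ / hQ| * hQ ≤ 3 * (C * d) := by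
        have hPne : hP ≠ 0 := hPpos.ne'
        have hQne : hQ ≠ 0 := hQpos.ne'
        have e1 : (aP / hP - aQ / hQ) * hQ = aP / hP * (hQ - hP) + (aP - aQ) := by
          field_simp
          ring
        have e2 : |aP / hP - aQ / hQ| * hQ = |aP / hP * (hQ - hP) + (aP - aQ)| := by
          rw [← e1, abs_mul, abs_of_pos hQpos]
        rw [e2]
        have t1 : |aP / hP * (hQ - hP)| ≤ 2 * (C * d) := by
          rw [abs_mul, abs_of_nonneg hTpos]
          calc aP / hP * |hQ - hP| ≤ 1 * (2 * (C * d)) :=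
                mul_le_mul hTle hhD (abs_nonneg _) zero_le_one
            _ = 2 * (C * d) := one_mul _
        calc |aP / hP * (hQ - hP) + (aP - aQ)|
            ≤ |aP / hP * (hQ - hP)| + |aP - aQ| := abs_add_le _ _
          _ ≤ 2 * (C * d) + C * d := add_le_add t1 haD
          _ = 3 * (C * d) := by ring
      have hTT1 : |aP / hP - aQ / hQ| ≤ 1 := by
        rw [abs_le]; constructor <;> linarith
      have hmin0 : 0 ≤ min hQ (3 * (C * d)) := le_min hQpos.le (by linarith)
      have hM1 : |aP / hP - aQ / hQ| ≤ min hQ (3 * (C * d)) / hQ := by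
        rw [le_div_iff₀ hQpos]
        exact le_min (mul_le_of_le_one_left hQpos.le hTT1) hTT
      have b1 : ‖Dφ kq.succ p.2 - Dφ kq.succ q.2‖ ≤ κ * (d / R) ^ β :=
        (hhold kq.succ p.2 hp' q.2 hq').trans (rmono _ _ (norm_nonneg _) hd2)
      have b2 : ‖Dφ kq.castSucc p.2 - Dφ kq.castSucc q.2‖ ≤ κ * (d / R) ^ β :=
        (hhold kq.castSucc p.2 hp' q.2 hq').trans (rmono _ _ (norm_nonneg _) hd2)
      have b3 : ‖Dφ kq.succ q.2 - Dφ kq.castSucc q.2‖ ≤ κ * (hQ / R) ^ β := by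
        have h := hpair kq.castSucc kq.succ q.2 hq'
        have habs : |φ kq.succ q.2 - φ kq.castSucc q.2| = hQ := by
          rw [← hhQ]
          exact abs_of_pos hQpos
        rwa [habs] at h
      have iden : πt p - πt q =
          (aP / hP) • (Dφ kq.succ p.2 - Dφ kq.succ q.2)
          + (1 - aP / hP) • (Dφ kq.castSucc p.2 - Dφ kq.castSucc q.2)
          + (aP / hP - aQ / hQ) • (Dφ kq.succ q.2 - Dφ kq.castSucc q.2) := by
        rw [hπp, hπq]; module
      have t1 : ‖(aP / hP) • (Dφ kq.succ p.2 - Dφ kq.succ q.2)‖ ≤ κ * (d / R) ^ β := by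
        rw [norm_smul, Real.norm_eq_abs, abs_of_nonneg hTpos]
        calc aP / hP * ‖Dφ kq.succ p.2 - Dφ kq.succ q.2‖
            ≤ 1 * (κ * (d / R) ^ β) := mul_le_mul hTle b1 (norm_nonneg _) zero_le_one
          _ = κ * (d / R) ^ β := one_mul _
      have t2 : ‖(1 - aP / hP) • (Dφ kq.castSucc p.2 - Dφ kq.castSucc q.2)‖
          ≤ κ * (d / R) ^ β := by
        rw [norm_smul, Real.norm_eq_abs]
        have h1 : |1 - aP / hP| ≤ 1 := by rw [abs_le]; constructor <;> linarith
        calc |1 - aP / hP| * ‖Dφ kq.castSucc p.2 - Dφ kq.castSucc q.2‖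
            ≤ 1 * (κ * (d / R) ^ β) := mul_le_mul h1 b2 (norm_nonneg _) zero_le_one
          _ = κ * (d / R) ^ β := one_mul _
      have t3 : ‖(aP / hP - aQ / hQ) • (Dφ kq.succ q.2 - Dφ kq.castSucc q.2)‖
          ≤ 3 * C * (κ * (d / R) ^ β) := by
        rw [norm_smul, Real.norm_eq_abs]
        calc |aP / hP - aQ / hQ| * ‖Dφ kq.succ q.2 - Dφ kq.castSucc q.2‖
            ≤ (min hQ (3 * (C * d)) / hQ) * (κ * (hQ / R) ^ β) :=
              mul_le_mul hM1 b3 (norm_nonneg _) (div_nonneg hmin0 hQpos.le)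
          _ ≤ κ * ((3 * (C * d)) / R) ^ β :=
              rpow_helper hβ0 hβ1 hR hκ.le hQpos hmin0 (min_le_left _ _) (min_le_right _ _)
          _ = κ * ((3 * C) * d / R) ^ β := by ring_nf
          _ ≤ (3 * C) * (κ * (d / R) ^ β) := cbound (3 * C) d (by linarith) hd0 le_rfl
          _ = 3 * C * (κ * (d / R) ^ β) := by ring
      rw [iden]
      refine le_trans (norm_add₃_le) ?_
      have hZC : κ * (d / R) ^ β ≤ C * (κ * (d / R) ^ β) := le_mul_of_one_le_left hZ0 hC1
      have hZC0 : 0 ≤ C * (κ * (d / R) ^ β) := le_trans hZ0 hZC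
      linarith [t1, t2, t3]
    · -- different layers
      set j := kp.succ with hj
      have hjq : j ≤ kq.castSucc := by
        rw [hj, Fin.le_def, Fin.val_succ, Fin.coe_castSucc]
        omega
      have hjcsq : φ j q.2 ≤ φ kq.castSucc q.2 := mono q.2 hq' j kq.castSucc hjq
      set γ : ℝ → X m := fun t => (1 - t) • p + t • q with hγ
      have hγc : Continuous γ := by
        rw [hγ]
        fun_prop
      set f : ℝ → ℝ := fun t => (γ t).1 - φ j (γ t).2 with hf
      have hfc : Continuous f := by
        rw [hf]
        exact (continuous_fst.comp hγc).sub ((hcont j).comp (continuous_snd.comp hγc))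
      have hγ0 : γ 0 = p := by rw [hγ]; simp
      have hγ1 : γ 1 = q := by rw [hγ]; simp
      have hf0' : f 0 = p.1 - φ j p.2 := by simp only [hf, hγ0]
      have hf1' : f 1 = q.1 - φ j q.2 := by simp only [hf, hγ1]
      have hzero : (0 : ℝ) ∈ Set.Icc (f 0) (f 1) := by
        constructor
        · rw [hf0']; linarith [hp2]
        · rw [hf1']; linarith [hq1, hjcsq]
      obtain ⟨t, ht, hft⟩ := intermediate_value_Icc zero_le_one hfc.continuousOn hzero
      set w := γ t with hw
      have hwQ : w ∈ QX m 0 (2 * r) := by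
        rw [hw, hγ]
        exact hQXConv hp hq (by linarith [ht.2]) ht.1 (by ring)
      have hw' : w.2 ∈ Qc m 0 (2 * r) := hQX2Qc w hwQ
      have hw1 : w.1 = φ j w.2 := by
        have h := hft
        simp only [hf] at h
        rw [← hw] at h
        linarith
      have hpwe : p - w = t • (p - q) := by
        simp only [hw, hγ]
        module
      have hpw : ‖p - w‖ ≤ d := by
        rw [hpwe, norm_smul, Real.norm_eq_abs, abs_of_nonneg ht.1, hd]
        exact mul_le_of_le_one_left (norm_nonneg _) ht.2
      have hqwe : q - w = (1 - t) • (q - p) := by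
        simp only [hw, hγ]
        module
      have hqw : ‖q - w‖ ≤ d := by
        rw [hqwe, norm_smul, Real.norm_eq_abs,
          abs_of_nonneg (by linarith [ht.2] : (0 : ℝ) ≤ 1 - t)]
        calc (1 - t) * ‖q - p‖ ≤ 1 * ‖q - p‖ :=
              mul_le_mul_of_nonneg_right (by linarith [ht.1]) (norm_nonneg _)
          _ = ‖p - q‖ := by rw [one_mul, norm_sub_rev]
          _ = d := hd.symm
      have hpw1 : |p.1 - w.1| ≤ ‖p - w‖ := by
        have h := norm_fst_le (p - w)
        simpa [Real.norm_eq_abs] using h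
      have hpw2 : ‖p.2 - w.2‖ ≤ ‖p - w‖ := by simpa using norm_snd_le (p - w)
      have hqw1 : |q.1 - w.1| ≤ ‖q - w‖ := by
        have h := norm_fst_le (q - w)
        simpa [Real.norm_eq_abs] using h
      have hqw2 : ‖q.2 - w.2‖ ≤ ‖q - w‖ := by simpa using norm_snd_le (q - w)
      obtain ⟨kw, hkw1, hkw2⟩ := hpart w hwQ
      have hkwp : kw.val ≤ kp.val := by
        by_contra hcon
        push_neg at hcon
        have hle : j ≤ kw.castSucc := by
          rw [hj, Fin.le_def, Fin.val_succ, Fin.coe_castSucc]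
          omega
        have h2 : φ j w.2 ≤ φ kw.castSucc w.2 := mono w.2 hw' _ _ hle
        rw [← hw1] at h2
        linarith [hkw1]
      have hkwe : φ kw.succ w.2 = w.1 := by
        have hle : kw.succ ≤ j := by
          rw [hj, Fin.le_def, Fin.val_succ, Fin.val_succ]
          omega
        have h2 : φ kw.succ w.2 ≤ φ j w.2 := mono w.2 hw' _ _ hle
        rw [← hw1] at h2
        linarith [hkw2]
      have hDweq : Dφ kw.succ w.2 = Dφ j w.2 := by
        have hpz : |φ j w.2 - φ kw.succ w.2| = 0 := by
          rw [hkwe, ← hw1, sub_self, abs_zero]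
        have h := hpair kw.succ j w.2 hw'
        rw [hpz, zero_div, Real.zero_rpow hβ0.ne', mul_zero] at h
        exact (sub_eq_zero.mp (norm_le_zero_iff.mp h)).symm
      have hπw : πt w = Dφ j w.2 := by
        have hden : φ kw.succ w.2 - φ kw.castSucc w.2 ≠ 0 :=
          ne_of_gt (sub_pos.mpr (lt_of_lt_of_le hkw1 hkw2))
        rw [hlayer kw w hwQ hkw1 hkw2, ← hkwe, div_self hden, ← hDweq]
        simp
      -- estimate for `p` (below the graph of `φ j`)
      have iden1 : πt p - Dφ j w.2 =
          (Dφ j p.2 - Dφ j w.2) + (1 - aP / hP) • (Dφ kp.castSucc p.2 - Dφ j p.2) := by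
        rw [hπp]
        module
      have down : ‖πt p - Dφ j w.2‖ ≤ (1 + C) * (κ * (d / R) ^ β) := by
        have t1 : ‖Dφ j p.2 - Dφ j w.2‖ ≤ κ * (d / R) ^ β :=
          (hhold j p.2 hp' w.2 hw').trans (rmono _ _ (norm_nonneg _) (hpw2.trans hpw))
        have hgap : hP - aP ≤ C * ‖p - w‖ := by
          have l1 : φ j p.2 - φ j w.2 ≤ S * ‖p - w‖ :=
            le_trans (le_abs_self _)
              ((lip j p.2 hp' w.2 hw').trans (mul_le_mul_of_nonneg_left hpw2 hS0))
          have l2 := abs_le.mp hpw1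
          have e : hP - aP = (φ j p.2 - φ j w.2) + (w.1 - p.1) := by
            rw [hhP, haP, hw1]
            ring
          have hCe : C * ‖p - w‖ = ‖p - w‖ + S * ‖p - w‖ := by rw [hCdef]; ring
          rw [e]
          linarith [l2.1]
        have t2 : ‖(1 - aP / hP) • (Dφ kp.castSucc p.2 - Dφ j p.2)‖
            ≤ C * (κ * (d / R) ^ β) := by
          rw [norm_smul, Real.norm_eq_abs]
          have h1 : |1 - aP / hP| = (hP - aP) / hP := by
            rw [abs_of_nonneg (by linarith [hTle])]
            field_simp
          have h2 : ‖Dφ kp.castSucc p.2 - Dφ j p.2‖ ≤ κ * (hP / R) ^ β := by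
            have h := hpair j kp.castSucc p.2 hp'
            have habs : |φ kp.castSucc p.2 - φ j p.2| = hP := by
              rw [abs_sub_comm, ← hhP]
              exact abs_of_pos hPpos
            rwa [habs] at h
          rw [h1]
          calc (hP - aP) / hP * ‖Dφ kp.castSucc p.2 - Dφ j p.2‖
              ≤ (hP - aP) / hP * (κ * (hP / R) ^ β) :=
                mul_le_mul_of_nonneg_left h2 (div_nonneg (by linarith) hPpos.le)
            _ ≤ κ * (C * ‖p - w‖ / R) ^ β :=
                rpow_helper hβ0 hβ1 hR hκ.le hPpos (by linarith) (by linarith [haP0]) hgap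
            _ ≤ C * (κ * (d / R) ^ β) := cbound C ‖p - w‖ hC1 (norm_nonneg _) hpw
        calc ‖πt p - Dφ j w.2‖
            = ‖(Dφ j p.2 - Dφ j w.2) + (1 - aP / hP) • (Dφ kp.castSucc p.2 - Dφ j p.2)‖ := by
              rw [iden1]
          _ ≤ ‖Dφ j p.2 - Dφ j w.2‖ + ‖(1 - aP / hP) • (Dφ kp.castSucc p.2 - Dφ j p.2)‖ :=
              norm_add_le _ _
          _ ≤ κ * (d / R) ^ β + C * (κ * (d / R) ^ β) := add_le_add t1 t2
          _ = (1 + C) * (κ * (d / R) ^ β) := by ring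
      -- estimate for `q` (above the graph of `φ j`)
      have hδ : q.1 - φ j q.2 ≤ C * ‖q - w‖ := by
        have l1 : φ j w.2 - φ j q.2 ≤ S * ‖q - w‖ := by
          have h := lip j w.2 hw' q.2 hq'
          have hn : ‖w.2 - q.2‖ ≤ ‖q - w‖ := by rw [norm_sub_rev]; exact hqw2
          exact le_trans (le_abs_self _) (h.trans (mul_le_mul_of_nonneg_left hn hS0))
        have l2 := abs_le.mp hqw1
        have hCe : C * ‖q - w‖ = ‖q - w‖ + S * ‖q - w‖ := by rw [hCdef]; ring
        have e : q.1 - φ j q.2 = (q.1 - w.1) + (φ j w.2 - φ j q.2) := by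
          rw [hw1]
          ring
        rw [e]
        linarith [l2.2]
      have hδ0 : aQ ≤ q.1 - φ j q.2 := by
        rw [haQ]
        linarith [hjcsq]
      have iden2 : πt q - Dφ j w.2 =
          (aQ / hQ) • (Dφ kq.succ q.2 - Dφ j q.2)
          + (1 - aQ / hQ) • (Dφ kq.castSucc q.2 - Dφ j q.2)
          + (Dφ j q.2 - Dφ j w.2) := by
        rw [hπq]
        module
      have hCqw0 : (0 : ℝ) ≤ C * ‖q - w‖ / R :=
        div_nonneg (mul_nonneg (by linarith) (norm_nonneg _)) hR.le
      have u3 : ‖Dφ j q.2 - Dφ j w.2‖ ≤ κ * (d / R) ^ β :=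
        (hhold j q.2 hq' w.2 hw').trans (rmono _ _ (norm_nonneg _) (hqw2.trans hqw))
      have u2 : ‖(1 - aQ / hQ) • (Dφ kq.castSucc q.2 - Dφ j q.2)‖
          ≤ C * (κ * (d / R) ^ β) := by
        rw [norm_smul, Real.norm_eq_abs]
        have h1 : |1 - aQ / hQ| ≤ 1 := by
          rw [abs_le]; constructor <;> linarith [hTQpos, hTQle]
        have h2 : ‖Dφ kq.castSucc q.2 - Dφ j q.2‖ ≤ κ * (C * ‖q - w‖ / R) ^ β := by
          refine (hpair j kq.castSucc q.2 hq').trans (rmono _ _ (abs_nonneg _) ?_)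
          rw [abs_of_nonneg (by linarith [hjcsq] : (0 : ℝ) ≤ φ kq.castSucc q.2 - φ j q.2)]
          linarith [hq1, hδ]
        calc |1 - aQ / hQ| * ‖Dφ kq.castSucc q.2 - Dφ j q.2‖
            ≤ 1 * (κ * (C * ‖q - w‖ / R) ^ β) :=
              mul_le_mul h1 h2 (norm_nonneg _) zero_le_one
          _ = κ * (C * ‖q - w‖ / R) ^ β := one_mul _
          _ ≤ C * (κ * (d / R) ^ β) := cbound C ‖q - w‖ hC1 (norm_nonneg _) hqw
      have u1 : ‖(aQ / hQ) • (Dφ kq.succ q.2 - Dφ j q.2)‖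
          ≤ 2 * C * (κ * (d / R) ^ β) := by
        rw [norm_smul, Real.norm_eq_abs, abs_of_nonneg hTQpos]
        have hnn : (0 : ℝ) ≤ φ kq.succ q.2 - φ j q.2 := by linarith [hjcsq, hq1, hq2]
        have hgap2 : |φ kq.succ q.2 - φ j q.2| ≤ hQ + C * ‖q - w‖ := by
          rw [abs_of_nonneg hnn]
          have e : φ kq.succ q.2 - φ j q.2 = hQ - aQ + (q.1 - φ j q.2) := by
            rw [hhQ, haQ]
            ring
          rw [e]
          linarith [hδ, haQ0]
        have step1 : ‖Dφ kq.succ q.2 - Dφ j q.2‖ ≤ κ * ((hQ + C * ‖q - w‖) / R) ^ β :=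
          (hpair j kq.succ q.2 hq').trans (rmono _ _ (abs_nonneg _) hgap2)
        have step2 : κ * ((hQ + C * ‖q - w‖) / R) ^ β
            ≤ κ * (hQ / R) ^ β + κ * (C * ‖q - w‖ / R) ^ β := by
          have e : (hQ + C * ‖q - w‖) / R = hQ / R + C * ‖q - w‖ / R := by ring
          have hs : ((hQ + C * ‖q - w‖) / R) ^ β ≤ (hQ / R) ^ β + (C * ‖q - w‖ / R) ^ β := by
            rw [e]
            exact rpow_subadd _ _ (by positivity) hCqw0 hβ0.le hβ1
          calc κ * ((hQ + C * ‖q - w‖) / R) ^ β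
              ≤ κ * ((hQ / R) ^ β + (C * ‖q - w‖ / R) ^ β) :=
                mul_le_mul_of_nonneg_left hs hκ.le
            _ = κ * (hQ / R) ^ β + κ * (C * ‖q - w‖ / R) ^ β := by ring
        have m1 : aQ / hQ * (κ * (hQ / R) ^ β) ≤ κ * (C * ‖q - w‖ / R) ^ β :=
          rpow_helper hβ0 hβ1 hR hκ.le hQpos haQ0.le haQhQ (hδ0.trans hδ)
        have m2 : aQ / hQ * (κ * (C * ‖q - w‖ / R) ^ β) ≤ κ * (C * ‖q - w‖ / R) ^ β :=
          mul_le_of_le_one_left (mul_nonneg hκ.le (Real.rpow_nonneg hCqw0 _)) hTQle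
        have mc : κ * (C * ‖q - w‖ / R) ^ β ≤ C * (κ * (d / R) ^ β) :=
          cbound C ‖q - w‖ hC1 (norm_nonneg _) hqw
        calc aQ / hQ * ‖Dφ kq.succ q.2 - Dφ j q.2‖
            ≤ aQ / hQ * (κ * ((hQ + C * ‖q - w‖) / R) ^ β) :=
              mul_le_mul_of_nonneg_left step1 hTQpos
          _ ≤ aQ / hQ * (κ * (hQ / R) ^ β + κ * (C * ‖q - w‖ / R) ^ β) :=
              mul_le_mul_of_nonneg_left step2 hTQpos
          _ = aQ / hQ * (κ * (hQ / R) ^ β) + aQ / hQ * (κ * (C * ‖q - w‖ / R) ^ β) := by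
              ring
          _ ≤ κ * (C * ‖q - w‖ / R) ^ β + κ * (C * ‖q - w‖ / R) ^ β := add_le_add m1 m2
          _ ≤ 2 * C * (κ * (d / R) ^ β) := by linarith [mc]
      have up : ‖πt q - Dφ j w.2‖
          ≤ 2 * C * (κ * (d / R) ^ β) + C * (κ * (d / R) ^ β) + κ * (d / R) ^ β := by
        calc ‖πt q - Dφ j w.2‖
            = ‖(aQ / hQ) • (Dφ kq.succ q.2 - Dφ j q.2)
              + (1 - aQ / hQ) • (Dφ kq.castSucc q.2 - Dφ j q.2)
              + (Dφ j q.2 - Dφ j w.2)‖ := by rw [iden2]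
          _ ≤ ‖(aQ / hQ) • (Dφ kq.succ q.2 - Dφ j q.2)‖
              + ‖(1 - aQ / hQ) • (Dφ kq.castSucc q.2 - Dφ j q.2)‖
              + ‖Dφ j q.2 - Dφ j w.2‖ := norm_add₃_le
          _ ≤ 2 * C * (κ * (d / R) ^ β) + C * (κ * (d / R) ^ β) + κ * (d / R) ^ β :=
              add_le_add (add_le_add u1 u2) u3
      have tri : ‖πt p - πt q‖ ≤ ‖πt p - Dφ j w.2‖ + ‖πt q - Dφ j w.2‖ := by
        calc ‖πt p - πt q‖ = ‖(πt p - Dφ j w.2) + (Dφ j w.2 - πt q)‖ := by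
              rw [sub_add_sub_cancel]
          _ ≤ ‖πt p - Dφ j w.2‖ + ‖Dφ j w.2 - πt q‖ := norm_add_le _ _
          _ = ‖πt p - Dφ j w.2‖ + ‖πt q - Dφ j w.2‖ := by
              rw [norm_sub_rev (Dφ j w.2) (πt q)]
      have hZC : κ * (d / R) ^ β ≤ C * (κ * (d / R) ^ β) := le_mul_of_one_le_left hZ0 hC1
      have hZC0 : 0 ≤ C * (κ * (d / R) ^ β) := le_trans hZ0 hZC
      linarith [tri, down, up]
  obtain ⟨ky, hy1, hy2⟩ := hpart y hy
  obtain ⟨kz, hz1, hz2⟩ := hpart z hz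
  rcases le_total ky.val kz.val with h | h
  · exact key y hy z hz ky kz hy1 hy2 hz1 hz2 h
  · have hkey := key z hz y hy kz ky hz1 hz2 hy1 hy2 h
    rwa [norm_sub_rev (πt z) (πt y), norm_sub_rev z y] at hkey
end
end

section
/- Let $(Q_r, \{\varphi_k : k \in K_+\})$ be a composite cube whose graphs satisfy $|D\varphi_l(x') - D\varphi_k(x')| \le \kappa(|\varphi_l(x') - \varphi_k(x')|/R)^{2\mu}$ and $|D\varphi_k(x') - D\varphi_k(y')| \le \kappa(|x'-y'|/R)^{2\mu}$. Fix $Q_\tau(z) \subset Q_r$ and let $\Psi(x) = (x^1 - z^1 - \pi'(z)\cdot(x'-z'),\ x'-z')$ be the shear transformation adapted to the flow direction at $z$, and let $\tilde\pi = (-1, \tilde\pi')$ be the derivative of the naturally induced flow with respect to $\Psi$ (defined via the transformed graphs $\tilde\varphi_k(y') = \varphi_k(y'+z') - z^1 - \pi'(z)\cdot y'$). Then $\tilde\pi'$ satisfies the pointwise identity $\tilde\pi_\alpha(y) = \pi_\alpha(y^1 + z^1 + \pi'(z)\cdot y',\ y' + z') - \pi_\alpha(z)$ for $\alpha = 2,\dots,n$,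 and consequently $\tilde\pi'(0) = 0$ and $|\tilde\pi'| \le c\kappa(\rho/R)^{2\mu}$ on every $Q_\rho \subset \Psi(Q_\tau(z))$, where $c$ depends on $n$, $\sup_k\|D\varphi_k\|_\infty$, $R^\gamma\sup_k[D\varphi_k]_{C^\gamma}$, and $|K|$. -/
open MeasureTheory

noncomputable section

namespace Stmt16Aux

lemma rpow_split {h μ : ℝ} (hh : 0 < h) : h ^ μ = h * h ^ (μ - 1) := by
  rw [show h * h ^ (μ - 1) = h ^ (1 : ℝ) * h ^ (μ - 1) by rw [Real.rpow_one],
    ← Real.rpow_add hh]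
  norm_num

lemma interp_le {μ a h b : ℝ} (hμ0 : 0 < μ) (hμ1 : μ ≤ 1) (hh : 0 < h)
    (ha0 : 0 ≤ a) (hah : a ≤ h) (hab : a ≤ b) (hb : 0 < b) :
    a / h * h ^ μ ≤ b ^ μ := by
  rcases le_total h b with hhb | hbh
  · calc a / h * h ^ μ ≤ 1 * h ^ μ :=
        mul_le_mul_of_nonneg_right ((div_le_one hh).2 hah) (Real.rpow_nonneg hh.le μ)
      _ = h ^ μ := one_mul _
      _ ≤ b ^ μ := Real.rpow_le_rpow hh.le hhb hμ0.le
  · have h2 : a / h * h ^ μ = a * h ^ (μ - 1) := by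
      rw [rpow_split hh]; field_simp
    have h3 : h ^ (μ - 1) ≤ b ^ (μ - 1) :=
      Real.rpow_le_rpow_of_nonpos hb hbh (by linarith)
    calc a / h * h ^ μ = a * h ^ (μ - 1) := h2
      _ ≤ b * b ^ (μ - 1) :=
        mul_le_mul hab h3 (Real.rpow_nonneg hh.le _) hb.le
      _ = b ^ μ := (rpow_split hb).symm

/-- tail estimate for interpolation terms -/
lemma tail_bound {E : Type*} [NormedAddCommGroup E] [NormedSpace ℝ E]
    {u : E} {a h κ R b μ : ℝ} (hκ : 0 ≤ κ) (hR : 0 < R) (hμ0 : 0 < μ) (hμ1 : μ ≤ 1)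
    (hh : 0 < h) (ha0 : 0 ≤ a) (hah : a ≤ h) (hab : a ≤ b) (hb : 0 < b)
    (huv : ‖u‖ ≤ κ * (h / R) ^ μ) (t : ℝ) (ht : |t| = a / h) :
    ‖t • u‖ ≤ κ * (b / R) ^ μ := by
  rw [norm_smul, Real.norm_eq_abs, ht]
  have h1 : (h / R) ^ μ = h ^ μ / R ^ μ := Real.div_rpow hh.le hR.le μ
  have h2 : (b / R) ^ μ = b ^ μ / R ^ μ := Real.div_rpow hb.le hR.le μ
  have h3 : a / h * h ^ μ ≤ b ^ μ := interp_le hμ0 hμ1 hh ha0 hah hab hb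
  have hRμ : 0 < R ^ μ := Real.rpow_pos_of_pos hR μ
  calc a / h * ‖u‖ ≤ a / h * (κ * (h ^ μ / R ^ μ)) := by
        apply mul_le_mul_of_nonneg_left _ (div_nonneg ha0 hh.le)
        rw [← h1]; exact huv
    _ = κ * ((a / h * h ^ μ) / R ^ μ) := by ring
    _ ≤ κ * (b ^ μ / R ^ μ) := by gcongr
    _ = κ * (b / R) ^ μ := by rw [h2]

/-- plain estimate with monotone bound on base -/
lemma plain_bound {E : Type*} [NormedAddCommGroup E] [NormedSpace ℝ E]
    {u : E} {κ x R b μ t : ℝ} (hκ : 0 ≤ κ) (hR : 0 < R) (hμ0 : 0 < μ)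
    (hx : 0 ≤ x) (hxb : x ≤ b) (hu : ‖u‖ ≤ κ * (x / R) ^ μ) (ht : |t| ≤ 1) :
    ‖t • u‖ ≤ κ * (b / R) ^ μ := by
  have h0 : 0 ≤ ‖u‖ := norm_nonneg u
  calc ‖t • u‖ = |t| * ‖u‖ := by rw [norm_smul, Real.norm_eq_abs]
    _ ≤ 1 * ‖u‖ := mul_le_mul_of_nonneg_right ht h0
    _ = ‖u‖ := one_mul _
    _ ≤ κ * (x / R) ^ μ := hu
    _ ≤ κ * (b / R) ^ μ := by
        apply mul_le_mul_of_nonneg_left _ hκ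
        apply Real.rpow_le_rpow (by positivity) (by gcongr) hμ0.le

lemma final_step {κ C ρ R μ v : ℝ} (hκ : 0 ≤ κ) (hC : 1 ≤ C) (hρ : 0 < ρ)
    (hR : 0 < R) (hμ0 : 0 < μ) (hμ1 : μ ≤ 1)
    (hv : v ≤ 4 * (κ * (C * ρ / R) ^ μ)) : v ≤ 4 * C * κ * (ρ / R) ^ μ := by
  have h1 : (C * ρ / R) ^ μ = C ^ μ * (ρ / R) ^ μ := by
    rw [show C * ρ / R = C * (ρ / R) by ring]
    exact Real.mul_rpow (by linarith) (by positivity)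
  have h2 : C ^ μ ≤ C := by
    calc C ^ μ ≤ C ^ (1 : ℝ) := Real.rpow_le_rpow_of_exponent_le hC hμ1
      _ = C := Real.rpow_one C
  calc v ≤ 4 * (κ * (C ^ μ * (ρ / R) ^ μ)) := by rw [← h1]; exact hv
    _ ≤ 4 * (κ * (C * (ρ / R) ^ μ)) := by
        have h4 : 0 ≤ (ρ / R) ^ μ := Real.rpow_nonneg (by positivity) μ
        have h5 : C ^ μ * (ρ / R) ^ μ ≤ C * (ρ / R) ^ μ :=
          mul_le_mul_of_nonneg_right h2 h4
        nlinarith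
    _ = 4 * C * κ * (ρ / R) ^ μ := by ring

lemma norm_add4_le {E : Type*} [NormedAddCommGroup E] (a b c d : E) :
    ‖a + b + c + d‖ ≤ ‖a‖ + ‖b‖ + ‖c‖ + ‖d‖ :=
  calc ‖a + b + c + d‖ ≤ ‖a + b + c‖ + ‖d‖ := norm_add_le _ _
    _ ≤ (‖a + b‖ + ‖c‖) + ‖d‖ := by gcongr; exact norm_add_le _ _
    _ ≤ (‖a‖ + ‖b‖ + ‖c‖) + ‖d‖ := by gcongr; exact norm_add_le _ _

lemma norm_add3_le {E : Type*} [NormedAddCommGroup E] (a b c : E) :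
    ‖a + b + c‖ ≤ ‖a‖ + ‖b‖ + ‖c‖ :=
  calc ‖a + b + c‖ ≤ ‖a + b‖ + ‖c‖ := norm_add_le _ _
    _ ≤ ‖a‖ + ‖b‖ + ‖c‖ := by gcongr; exact norm_add_le _ _

lemma coord_le_norm {m : ℕ} (x : Em m) (i : Fin m) : |x i| ≤ ‖x‖ := by
  rw [EuclideanSpace.norm_eq, ← Real.sqrt_sq_eq_abs]
  apply Real.sqrt_le_sqrt
  calc x i ^ 2 = ‖x i‖ ^ 2 := by rw [Real.norm_eq_abs, sq_abs]
    _ ≤ ∑ j, ‖x j‖ ^ 2 :=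
      Finset.single_le_sum (f := fun j => ‖x j‖ ^ 2) (fun j _ => sq_nonneg _)
        (Finset.mem_univ i)

lemma norm_le_sqrt_mul {m : ℕ} (x : Em m) (ρ : ℝ) (hρ : 0 ≤ ρ)
    (hx : ∀ i, |x i| ≤ ρ) : ‖x‖ ≤ Real.sqrt m * ρ := by
  rw [EuclideanSpace.norm_eq]
  have h1 : ∑ j, ‖x j‖ ^ 2 ≤ (m : ℝ) * ρ ^ 2 := by
    calc ∑ j, ‖x j‖ ^ 2 ≤ ∑ _j : Fin m, ρ ^ 2 := by
          apply Finset.sum_le_sum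
          intro j _
          rw [Real.norm_eq_abs]
          exact pow_le_pow_left₀ (abs_nonneg _) (hx j) 2
      _ = (m : ℝ) * ρ ^ 2 := by simp [Finset.sum_const, mul_comm]
  calc Real.sqrt (∑ j, ‖x j‖ ^ 2) ≤ Real.sqrt ((m : ℝ) * ρ ^ 2) := Real.sqrt_le_sqrt h1
    _ = Real.sqrt m * ρ := by
        rw [Real.sqrt_mul (Nat.cast_nonneg m), Real.sqrt_sq hρ]

lemma convex_Qc (m : ℕ) (r : ℝ) : Convex ℝ (Qc m 0 r) := by
  intro x hx y hy a b ha hb hab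
  intro i
  have hxi := hx i
  have hyi := hy i
  simp only [Qc, Set.mem_setOf_eq, PiLp.zero_apply, sub_zero] at *
  have he : (a • x + b • y) i = a * x i + b * y i := rfl
  rw [he]
  rcases eq_or_lt_of_le ha with heq | ha'
  · have hb1 : b = 1 := by linarith
    rw [← heq, hb1]
    simpa using hyi
  · calc |a * x i + b * y i| ≤ |a * x i| + |b * y i| := abs_add_le _ _
      _ = a * |x i| + b * |y i| := by
          rw [abs_mul, abs_mul, abs_of_nonneg ha, abs_of_nonneg hb]
      _ < a * r + b * r := by
          apply add_lt_add_of_lt_of_le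
          · exact (mul_lt_mul_iff_right₀ ha').2 hxi
          · exact mul_le_mul_of_nonneg_left hyi.le hb
      _ = r := by rw [← add_mul, hab, one_mul]

lemma mvt {m : ℕ} {f : Em m → ℝ} {g : Em m → Em m} {M r : ℝ}
    (hgrad : ∀ x', HasGradientAt f (g x') x')
    (hbd : ∀ x' ∈ Qc m 0 r, ‖g x'‖ ≤ M)
    {x y : Em m} (hx : x ∈ Qc m 0 r) (hy : y ∈ Qc m 0 r) :
    |f x - f y| ≤ M * ‖x - y‖ := by
  have hconv := convex_Qc m r
  have h := hconv.norm_image_sub_le_of_norm_hasFDerivWithin_le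
    (f' := fun x' => InnerProductSpace.toDual ℝ (Em m) (g x'))
    (fun x' _ => ((hgrad x').hasFDerivAt).hasFDerivWithinAt)
    (fun x' hx' => by
      rw [LinearIsometryEquiv.norm_map]
      exact hbd x' hx') hy hx
  rw [← Real.norm_eq_abs]
  exact h

end Stmt16Aux

set_option maxHeartbeats 1600000 in
/-- After shearing by the slope of the flow at the center `z`, the transformed flow
field equals the translated original one, vanishes at the origin, and decays like
`ρ^{2μ}` on cubes around the origin. -/
theorem stmt_16 (m L : ℕ) (S Γ : ℝ) (γ : ℝ) (hγ : 0 < γ) (hγ1 : γ ≤ 1) :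
    ∃ c > 0, ∀ (r R κ μ τ : ℝ) (z : X m)
      (φ : Fin (L + 1) → Em m → ℝ) (Dφ : Fin (L + 1) → Em m → Em m)
      (πt πtt : X m → Em m) (Ψ : X m → X m) (φt : Fin (L + 1) → Em m → ℝ),
      0 < r → 0 < R → 0 < κ → 0 < μ → μ ≤ 1 / 4 → 0 < τ →
      QX m z τ ⊆ QX m 0 r →
      (∀ k x', HasGradientAt (φ k) (Dφ k x') x') →
      (∀ k : Fin L, ∀ x' ∈ Qc m 0 r, φ k.castSucc x' ≤ φ k.succ x') →
      -- the layers partition the cube Q_r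
      (∀ p ∈ QX m 0 r, ∃ k : Fin L, φ k.castSucc p.2 < p.1 ∧ p.1 ≤ φ k.succ p.2) →
      -- graph conditions
      (∀ k l : Fin (L + 1), ∀ x' ∈ Qc m 0 r,
        ‖Dφ l x' - Dφ k x'‖ ≤ κ * (|φ l x' - φ k x'| / R) ^ (2 * μ)) →
      (∀ k : Fin (L + 1), ∀ x' ∈ Qc m 0 r, ∀ y' ∈ Qc m 0 r,
        ‖Dφ k x' - Dφ k y'‖ ≤ κ * (‖x' - y'‖ / R) ^ (2 * μ)) →
      (∀ k : Fin (L + 1), ∀ x' ∈ Qc m 0 r, ‖Dφ k x'‖ ≤ S) →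
      (∀ k : Fin (L + 1), ∀ x' ∈ Qc m 0 r, ∀ y' ∈ Qc m 0 r,
        ‖Dφ k x' - Dφ k y'‖ ≤ (Γ / R ^ γ) * ‖x' - y'‖ ^ γ) →
      -- layerwise definition of π'
      (∀ k : Fin L, ∀ p ∈ QX m 0 r,
        φ k.castSucc p.2 < p.1 → p.1 ≤ φ k.succ p.2 →
          πt p = ((p.1 - φ k.castSucc p.2) / (φ k.succ p.2 - φ k.castSucc p.2)) •
                    Dφ k.succ p.2
            + (1 - (p.1 - φ k.castSucc p.2) / (φ k.succ p.2 - φ k.castSucc p.2)) •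
                Dφ k.castSucc p.2) →
      -- the shear transformation adapted to the flow direction at z
      (∀ p : X m, Ψ p = (p.1 - z.1 - ∑ i, πt z i * (p.2 i - z.2 i), p.2 - z.2)) →
      -- the transformed graphs
      (∀ k y', φt k y' = φ k (y' + z.2) - z.1 - ∑ i, πt z i * y' i) →
      -- layerwise definition of the transformed flow field (slopes Dφ̃ = Dφ - π'(z))
      (∀ k : Fin L, ∀ q ∈ Ψ '' QX m z τ,
        φt k.castSucc q.2 < q.1 → q.1 ≤ φt k.succ q.2 →
          πtt q = ((q.1 - φt k.castSucc q.2) / (φt k.succ q.2 - φt k.castSucc q.2)) •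
                    (Dφ k.succ (q.2 + z.2) - πt z)
            + (1 - (q.1 - φt k.castSucc q.2) / (φt k.succ q.2 - φt k.castSucc q.2)) •
                (Dφ k.castSucc (q.2 + z.2) - πt z)) →
      -- (a) pointwise identity
      (∀ q ∈ Ψ '' QX m z τ,
        πtt q = πt (q.1 + z.1 + ∑ i, πt z i * q.2 i, q.2 + z.2) - πt z) ∧
      -- (b) vanishing at the origin
      πtt (0 : X m) = 0 ∧
      -- (c) decay on cubes around the origin
      (∀ ρ : ℝ, 0 < ρ → QX m (0 : X m) ρ ⊆ Ψ '' QX m z τ →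
        ∀ q ∈ QX m (0 : X m) ρ, ‖πtt q‖ ≤ c * κ * (ρ / R) ^ (2 * μ)) := by
  classical
  open Stmt16Aux in
  set M : ℝ := max S 0 with hMdef
  set A : ℝ := 1 + m * M with hAdef
  set B : ℝ := M * Real.sqrt m with hBdef
  set C : ℝ := A + 3 * B + Real.sqrt m + 1 with hCdef
  have hM0 : 0 ≤ M := le_max_right _ _
  have hsm : 0 ≤ Real.sqrt m := Real.sqrt_nonneg _
  have hA1 : 1 ≤ A := by rw [hAdef]; nlinarith [Nat.cast_nonneg (α := ℝ) m]
  have hB0 : 0 ≤ B := by rw [hBdef]; positivity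
  have hC1 : 1 ≤ C := by rw [hCdef]; linarith
  refine ⟨4 * C, by linarith, ?_⟩
  intro r R κ μ τ z φ Dφ πt πtt Ψ φt hr hR hκ hμ hμ4 hτ hsub hgrad hord hlayer
    hgr1 hgr2 hgS hgΓ hπ hΨ hφt hπtt
  have hμ2pos : 0 < 2 * μ := by linarith
  have hμ2le : 2 * μ ≤ 1 := by linarith
  have hzτ : z ∈ QX m z τ := ⟨by simpa using hτ, fun i => by simpa using hτ⟩
  have hzr : z ∈ QX m 0 r := hsub hzτ
  have memQc : ∀ p ∈ QX m 0 r, p.2 ∈ Qc m 0 r := by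
    intro p hp i
    simpa using hp.2 i
  have hz2 : z.2 ∈ Qc m 0 r := memQc z hzr
  obtain ⟨k0, hk0l, hk0r⟩ := hlayer z hzr
  have hπz := hπ k0 z hzr hk0l hk0r
  have hmono : ∀ x' ∈ Qc m 0 r, ∀ j k : Fin (L + 1), j ≤ k → φ j x' ≤ φ k x' := by
    intro x' hx' j k hjk
    have hmo : Monotone (fun k : Fin (L + 1) => φ k x') :=
      Fin.monotone_iff_le_succ.mpr (fun i => hord i x' hx')
    exact hmo hjk
  -- part (a)
  have parta : ∀ q ∈ Ψ '' QX m z τ,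
      πtt q = πt (q.1 + z.1 + ∑ i, πt z i * q.2 i, q.2 + z.2) - πt z := by
    rintro q ⟨p, hp, rfl⟩
    have hc2 : (Ψ p).2 = p.2 - z.2 := by rw [hΨ p]
    have hc1 : (Ψ p).1 = p.1 - z.1 - ∑ i, πt z i * (p.2 i - z.2 i) := by rw [hΨ p]
    have hsum : ∑ i, πt z i * (Ψ p).2 i = ∑ i, πt z i * (p.2 i - z.2 i) := by
      refine Finset.sum_congr rfl fun i _ => ?_
      rw [hc2]
      simp [PiLp.sub_apply]
    have hadd : (Ψ p).2 + z.2 = p.2 := by rw [hc2]; abel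
    have hfst : (Ψ p).1 + z.1 + ∑ i, πt z i * (Ψ p).2 i = p.1 := by
      rw [hc1, hsum]; ring
    rw [hfst, hadd]
    have hpr : p ∈ QX m 0 r := hsub hp
    obtain ⟨k1, h1l, h1r⟩ := hlayer p hpr
    have hπp := hπ k1 p hpr h1l h1r
    have hφtc : ∀ k : Fin (L + 1),
        φt k (Ψ p).2 = φ k p.2 - z.1 - ∑ i, πt z i * (p.2 i - z.2 i) := by
      intro k
      rw [hφt k (Ψ p).2, hadd, hsum]
    have hT : (Ψ p).1 - φt k1.castSucc (Ψ p).2 = p.1 - φ k1.castSucc p.2 := by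
      rw [hφtc, hc1]; ring
    have hH : φt k1.succ (Ψ p).2 - φt k1.castSucc (Ψ p).2
        = φ k1.succ p.2 - φ k1.castSucc p.2 := by
      rw [hφtc, hφtc]; ring
    have hcond1 : φt k1.castSucc (Ψ p).2 < (Ψ p).1 := by
      have h' : (Ψ p).1 - φt k1.castSucc (Ψ p).2 = p.1 - φ k1.castSucc p.2 := hT
      linarith
    have hcond2 : (Ψ p).1 ≤ φt k1.succ (Ψ p).2 := by
      have h' : (Ψ p).1 - φt k1.succ (Ψ p).2 = p.1 - φ k1.succ p.2 := by
        rw [hφtc, hc1]; ring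
      linarith
    have hπttq := hπtt k1 (Ψ p) ⟨p, hp, rfl⟩ hcond1 hcond2
    rw [hπttq, hT, hH, hadd, hπp]
    module
  -- part (b)
  have hΨz : Ψ z = 0 := by
    rw [hΨ z]
    simp
  have partb : πtt (0 : X m) = 0 := by
    have h0mem : (0 : X m) ∈ Ψ '' QX m z τ := ⟨z, hzτ, hΨz⟩
    have harg : ((0 : X m).1 + z.1 + ∑ i, πt z i * (0 : X m).2 i, (0 : X m).2 + z.2)
        = z := by
      have h1 : (0 : X m).1 = 0 := rfl
      have h2 : (0 : X m).2 = 0 := rfl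
      rw [h1, h2]
      simp
    rw [parta 0 h0mem, harg, sub_self]
  refine ⟨parta, partb, ?_⟩
  -- part (c)
  intro ρ hρ hQρ q hq
  obtain ⟨p, hpτ, hΨp⟩ := hQρ hq
  have hc2 : q.2 = p.2 - z.2 := by rw [← hΨp, hΨ p]
  have hc1 : q.1 = p.1 - z.1 - ∑ i, πt z i * (p.2 i - z.2 i) := by rw [← hΨp, hΨ p]
  have hq2p : q.2 + z.2 = p.2 := by rw [hc2]; abel
  have hsum : ∑ i, πt z i * q.2 i = ∑ i, πt z i * (p.2 i - z.2 i) := by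
    refine Finset.sum_congr rfl fun i _ => ?_
    rw [hc2]
    simp [PiLp.sub_apply]
  have hfst : q.1 + z.1 + ∑ i, πt z i * q.2 i = p.1 := by rw [hc1, hsum]; ring
  have hid : πtt q = πt p - πt z := by
    have h' := parta q (hQρ hq)
    rw [hfst, hq2p] at h'
    exact h'
  have hq1ρ : |q.1| < ρ := by simpa using hq.1
  have hq2ρ : ∀ i, |q.2 i| ≤ ρ := fun i => le_of_lt (by simpa using hq.2 i)
  have hpr : p ∈ QX m 0 r := hsub hpτ
  have hp2 : p.2 ∈ Qc m 0 r := memQc p hpr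
  have hnq2 : ‖p.2 - z.2‖ ≤ Real.sqrt m * ρ := by
    rw [← hc2]
    exact Stmt16Aux.norm_le_sqrt_mul q.2 ρ hρ.le hq2ρ
  have hMk : ∀ k : Fin (L + 1), ∀ x' ∈ Qc m 0 r, ‖Dφ k x'‖ ≤ M :=
    fun k x' hx' => (hgS k x' hx').trans (le_max_left _ _)
  -- the z-layer quantities
  set a0 : ℝ := z.1 - φ k0.castSucc z.2 with ha0def
  set h0 : ℝ := φ k0.succ z.2 - φ k0.castSucc z.2 with hh0def
  have ha0pos : 0 < a0 := by rw [ha0def]; linarith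
  have ha0h0 : a0 ≤ h0 := by rw [ha0def, hh0def]; linarith
  have h0pos : 0 < h0 := lt_of_lt_of_le ha0pos ha0h0
  have hT0a : 0 ≤ a0 / h0 := div_nonneg ha0pos.le h0pos.le
  have hT0b : a0 / h0 ≤ 1 := (div_le_one h0pos).2 ha0h0
  have hπznorm : ‖πt z‖ ≤ M := by
    rw [hπz]
    calc ‖(a0 / h0) • Dφ k0.succ z.2 + (1 - a0 / h0) • Dφ k0.castSucc z.2‖
        ≤ ‖(a0 / h0) • Dφ k0.succ z.2‖ + ‖(1 - a0 / h0) • Dφ k0.castSucc z.2‖ :=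
          norm_add_le _ _
      _ = (a0 / h0) * ‖Dφ k0.succ z.2‖ + (1 - a0 / h0) * ‖Dφ k0.castSucc z.2‖ := by
          rw [norm_smul, norm_smul, Real.norm_eq_abs, Real.norm_eq_abs,
            abs_of_nonneg hT0a, abs_of_nonneg (by linarith)]
      _ ≤ (a0 / h0) * M + (1 - a0 / h0) * M := by
          apply add_le_add
          · exact mul_le_mul_of_nonneg_left (hMk _ _ hz2) hT0a
          · exact mul_le_mul_of_nonneg_left (hMk _ _ hz2) (by linarith)
      _ = M := by ring
  have hcoord : ∀ i, |πt z i| ≤ M :=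
    fun i => (Stmt16Aux.coord_le_norm _ i).trans hπznorm
  have hp1z1 : |p.1 - z.1| ≤ A * ρ := by
    have hS : |∑ i, πt z i * q.2 i| ≤ m * (M * ρ) := by
      calc |∑ i, πt z i * q.2 i| ≤ ∑ i, |πt z i * q.2 i| :=
            Finset.abs_sum_le_sum_abs _ _
        _ ≤ ∑ _i : Fin m, M * ρ := Finset.sum_le_sum fun i _ => by
            rw [abs_mul]
            exact mul_le_mul (hcoord i) (hq2ρ i) (abs_nonneg _) hM0
        _ = m * (M * ρ) := by simp [Finset.sum_const]
    have he : p.1 - z.1 = q.1 + ∑ i, πt z i * q.2 i := by linarith [hfst]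
    calc |p.1 - z.1| = |q.1 + ∑ i, πt z i * q.2 i| := by rw [he]
      _ ≤ |q.1| + |∑ i, πt z i * q.2 i| := abs_add_le _ _
      _ ≤ ρ + m * (M * ρ) := add_le_add hq1ρ.le hS
      _ = A * ρ := by rw [hAdef]; ring
  have hmv : ∀ k : Fin (L + 1), |φ k p.2 - φ k z.2| ≤ B * ρ := by
    intro k
    calc |φ k p.2 - φ k z.2| ≤ M * ‖p.2 - z.2‖ :=
        Stmt16Aux.mvt (hgrad k) (hMk k) hp2 hz2
      _ ≤ M * (Real.sqrt m * ρ) := mul_le_mul_of_nonneg_left hnq2 hM0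
      _ = B * ρ := by rw [hBdef]; ring
  -- the p-layer quantities
  obtain ⟨k1, hk1l, hk1r⟩ := hlayer p hpr
  have hπp := hπ k1 p hpr hk1l hk1r
  set a1 : ℝ := p.1 - φ k1.castSucc p.2 with ha1def
  set h1 : ℝ := φ k1.succ p.2 - φ k1.castSucc p.2 with hh1def
  have ha1pos : 0 < a1 := by rw [ha1def]; linarith
  have ha1h1 : a1 ≤ h1 := by rw [ha1def, hh1def]; linarith
  have h1pos : 0 < h1 := lt_of_lt_of_le ha1pos ha1h1
  have hT1a : 0 ≤ a1 / h1 := div_nonneg ha1pos.le h1pos.le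
  have hT1b : a1 / h1 ≤ 1 := (div_le_one h1pos).2 ha1h1
  -- constants
  have hCρ : 0 < C * ρ := by positivity
  have hsqC : Real.sqrt m * ρ ≤ C * ρ := by
    apply mul_le_mul_of_nonneg_right _ hρ.le
    rw [hCdef]; linarith
  have hABC : (A + B) * ρ ≤ C * ρ := by
    apply mul_le_mul_of_nonneg_right _ hρ.le
    rw [hCdef]; linarith
  have hA3BC : (A + 3 * B) * ρ ≤ C * ρ := by
    apply mul_le_mul_of_nonneg_right _ hρ.le
    rw [hCdef]; linarith
  -- graph bounds
  have hgap0 : ‖Dφ k0.succ z.2 - Dφ k0.castSucc z.2‖ ≤ κ * (h0 / R) ^ (2 * μ) := by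
    have h' := hgr1 k0.castSucc k0.succ z.2 hz2
    rwa [show |φ k0.succ z.2 - φ k0.castSucc z.2| = h0 by
      rw [abs_of_nonneg (by linarith)]] at h'
  have hgap1 : ‖Dφ k1.succ p.2 - Dφ k1.castSucc p.2‖ ≤ κ * (h1 / R) ^ (2 * μ) := by
    have h' := hgr1 k1.castSucc k1.succ p.2 hp2
    rwa [show |φ k1.succ p.2 - φ k1.castSucc p.2| = h1 by
      rw [abs_of_nonneg (by linarith)]] at h'
  rw [hid]
  apply Stmt16Aux.final_step hκ.le hC1 hρ hR hμ2pos hμ2le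
  have hE0 : 0 ≤ κ * (C * ρ / R) ^ (2 * μ) := by positivity
  obtain ⟨y1, y2⟩ := abs_le.mp hp1z1
  rcases lt_trichotomy k0 k1 with hlt | heq | hgt
  · -- k0 < k1
    have hsle : k0.succ ≤ k1.castSucc := Fin.succ_le_castSucc_iff.mpr hlt
    have hch_p : φ k0.succ p.2 ≤ φ k1.castSucc p.2 := hmono p.2 hp2 _ _ hsle
    have hch_z : φ k0.succ z.2 ≤ φ k1.castSucc z.2 := hmono z.2 hz2 _ _ hsle
    obtain ⟨w1, w2⟩ := abs_le.mp (hmv k0.succ)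
    obtain ⟨x1, x2⟩ := abs_le.mp (hmv k1.castSucc)
    have hn1 : a1 ≤ (A + B) * ρ := by linarith
    have hgapz1 : 0 ≤ φ k1.castSucc z.2 - φ k0.succ z.2 := by linarith
    have hgapz2 : φ k1.castSucc z.2 - φ k0.succ z.2 ≤ (A + B) * ρ := by linarith
    have hn4 : h0 - a0 ≤ (A + B) * ρ := by
      rw [hh0def, ha0def]; linarith
    have hdec : πt p - πt z =
        (a1 / h1) • (Dφ k1.succ p.2 - Dφ k1.castSucc p.2)
        + (1 : ℝ) • (Dφ k1.castSucc p.2 - Dφ k1.castSucc z.2)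
        + (1 : ℝ) • (Dφ k1.castSucc z.2 - Dφ k0.succ z.2)
        + (1 - a0 / h0) • (Dφ k0.succ z.2 - Dφ k0.castSucc z.2) := by
      rw [hπp, hπz]; module
    have e1 : ‖(a1 / h1) • (Dφ k1.succ p.2 - Dφ k1.castSucc p.2)‖
        ≤ κ * (C * ρ / R) ^ (2 * μ) := by
      apply Stmt16Aux.tail_bound hκ.le hR hμ2pos hμ2le h1pos ha1pos.le ha1h1
        (hn1.trans hABC) hCρ hgap1 _ (abs_of_nonneg hT1a)
    have e2 : ‖(1 : ℝ) • (Dφ k1.castSucc p.2 - Dφ k1.castSucc z.2)‖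
        ≤ κ * (C * ρ / R) ^ (2 * μ) := by
      apply Stmt16Aux.plain_bound hκ.le hR hμ2pos (norm_nonneg _)
        (hnq2.trans hsqC) (hgr2 k1.castSucc p.2 hp2 z.2 hz2) (by norm_num)
    have e3 : ‖(1 : ℝ) • (Dφ k1.castSucc z.2 - Dφ k0.succ z.2)‖
        ≤ κ * (C * ρ / R) ^ (2 * μ) := by
      apply Stmt16Aux.plain_bound hκ.le hR hμ2pos (abs_nonneg _)
        ((abs_le.mpr ⟨by linarith, hgapz2⟩).trans hABC)
        (hgr1 k0.succ k1.castSucc z.2 hz2) (by norm_num)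
    have e4 : ‖(1 - a0 / h0) • (Dφ k0.succ z.2 - Dφ k0.castSucc z.2)‖
        ≤ κ * (C * ρ / R) ^ (2 * μ) := by
      apply Stmt16Aux.tail_bound hκ.le hR hμ2pos hμ2le h0pos (by linarith)
        (by linarith) (hn4.trans hABC) hCρ hgap0
      rw [abs_of_nonneg (by linarith : (0:ℝ) ≤ 1 - a0 / h0), eq_div_iff (ne_of_gt h0pos),
        sub_mul, div_mul_cancel₀ _ (ne_of_gt h0pos), one_mul]
    rw [hdec]
    refine le_trans (Stmt16Aux.norm_add4_le _ _ _ _) ?_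
    linarith
  · -- k0 = k1
    subst heq
    have hTTle : |a1 / h1 - a0 / h0| ≤ 1 := by
      apply abs_le.mpr; constructor <;> linarith
    obtain ⟨w1, w2⟩ := abs_le.mp (hmv k0.succ)
    obtain ⟨x1, x2⟩ := abs_le.mp (hmv k0.castSucc)
    have habs1 : |a1 - a0| ≤ (A + B) * ρ := by
      apply abs_le.mpr; constructor <;> linarith
    have habs2 : |h0 - h1| ≤ 2 * B * ρ := by
      apply abs_le.mpr
      constructor <;> linarith
    have hTT : (a1 / h1 - a0 / h0) * h0 = (a1 - a0) + (a1 / h1) * (h0 - h1) := by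
      have h0ne : h0 ≠ 0 := ne_of_gt h0pos
      have h1ne : h1 ≠ 0 := ne_of_gt h1pos
      field_simp
      ring
    have hkey : |a1 / h1 - a0 / h0| * h0 ≤ (A + 3 * B) * ρ := by
      rw [show |a1 / h1 - a0 / h0| * h0 = |(a1 / h1 - a0 / h0) * h0| by
        rw [abs_mul, abs_of_pos h0pos], hTT]
      calc |(a1 - a0) + (a1 / h1) * (h0 - h1)|
          ≤ |a1 - a0| + |(a1 / h1) * (h0 - h1)| := abs_add_le _ _
        _ ≤ (A + B) * ρ + 1 * (2 * B * ρ) := by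
            apply add_le_add habs1
            rw [abs_mul]
            exact mul_le_mul (abs_le.mpr ⟨by linarith, hT1b⟩) habs2
              (abs_nonneg _) zero_le_one
        _ = (A + 3 * B) * ρ := by ring
    have hdec : πt p - πt z =
        (a1 / h1) • (Dφ k0.succ p.2 - Dφ k0.succ z.2)
        + (1 - a1 / h1) • (Dφ k0.castSucc p.2 - Dφ k0.castSucc z.2)
        + (a1 / h1 - a0 / h0) • (Dφ k0.succ z.2 - Dφ k0.castSucc z.2) := by
      rw [hπp, hπz]; module
    have e1 : ‖(a1 / h1) • (Dφ k0.succ p.2 - Dφ k0.succ z.2)‖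
        ≤ κ * (C * ρ / R) ^ (2 * μ) := by
      apply Stmt16Aux.plain_bound hκ.le hR hμ2pos (norm_nonneg _)
        (hnq2.trans hsqC) (hgr2 k0.succ p.2 hp2 z.2 hz2)
        (abs_le.mpr ⟨by linarith, hT1b⟩)
    have e2 : ‖(1 - a1 / h1) • (Dφ k0.castSucc p.2 - Dφ k0.castSucc z.2)‖
        ≤ κ * (C * ρ / R) ^ (2 * μ) := by
      apply Stmt16Aux.plain_bound hκ.le hR hμ2pos (norm_nonneg _)
        (hnq2.trans hsqC) (hgr2 k0.castSucc p.2 hp2 z.2 hz2)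
        (abs_le.mpr ⟨by linarith, by linarith⟩)
    have e3 : ‖(a1 / h1 - a0 / h0) • (Dφ k0.succ z.2 - Dφ k0.castSucc z.2)‖
        ≤ κ * (C * ρ / R) ^ (2 * μ) := by
      apply Stmt16Aux.tail_bound hκ.le hR hμ2pos hμ2le h0pos
        (mul_nonneg (abs_nonneg _) h0pos.le)
        (by calc |a1 / h1 - a0 / h0| * h0 ≤ 1 * h0 :=
              mul_le_mul_of_nonneg_right hTTle h0pos.le
            _ = h0 := one_mul _)
        (hkey.trans hA3BC) hCρ hgap0
      rw [mul_div_cancel_right₀ _ (ne_of_gt h0pos)]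
    rw [hdec]
    refine le_trans (Stmt16Aux.norm_add3_le _ _ _) ?_
    linarith
  · -- k1 < k0
    have hsle : k1.succ ≤ k0.castSucc := Fin.succ_le_castSucc_iff.mpr hgt
    have hch_p : φ k1.succ p.2 ≤ φ k0.castSucc p.2 := hmono p.2 hp2 _ _ hsle
    have hch_z : φ k1.succ z.2 ≤ φ k0.castSucc z.2 := hmono z.2 hz2 _ _ hsle
    obtain ⟨w1, w2⟩ := abs_le.mp (hmv k1.succ)
    obtain ⟨x1, x2⟩ := abs_le.mp (hmv k0.castSucc)
    have hn1 : h1 - a1 ≤ (A + B) * ρ := by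
      rw [hh1def, ha1def]; linarith
    have hgapz1 : φ k1.succ z.2 - φ k0.castSucc z.2 ≤ 0 := by linarith
    have hgapz2 : -((A + B) * ρ) ≤ φ k1.succ z.2 - φ k0.castSucc z.2 := by linarith
    have hn4 : a0 ≤ (A + B) * ρ := by
      rw [ha0def]; linarith
    have hdec : πt p - πt z =
        (-(1 - a1 / h1)) • (Dφ k1.succ p.2 - Dφ k1.castSucc p.2)
        + (1 : ℝ) • (Dφ k1.succ p.2 - Dφ k1.succ z.2)
        + (1 : ℝ) • (Dφ k1.succ z.2 - Dφ k0.castSucc z.2)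
        + (-(a0 / h0)) • (Dφ k0.succ z.2 - Dφ k0.castSucc z.2) := by
      rw [hπp, hπz]; module
    have e1 : ‖(-(1 - a1 / h1)) • (Dφ k1.succ p.2 - Dφ k1.castSucc p.2)‖
        ≤ κ * (C * ρ / R) ^ (2 * μ) := by
      apply Stmt16Aux.tail_bound hκ.le hR hμ2pos hμ2le h1pos (by linarith)
        (by linarith) (hn1.trans hABC) hCρ hgap1
      rw [abs_neg, abs_of_nonneg (by linarith : (0:ℝ) ≤ 1 - a1 / h1),
        eq_div_iff (ne_of_gt h1pos), sub_mul, div_mul_cancel₀ _ (ne_of_gt h1pos), one_mul]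
    have e2 : ‖(1 : ℝ) • (Dφ k1.succ p.2 - Dφ k1.succ z.2)‖
        ≤ κ * (C * ρ / R) ^ (2 * μ) := by
      apply Stmt16Aux.plain_bound hκ.le hR hμ2pos (norm_nonneg _)
        (hnq2.trans hsqC) (hgr2 k1.succ p.2 hp2 z.2 hz2) (by norm_num)
    have e3 : ‖(1 : ℝ) • (Dφ k1.succ z.2 - Dφ k0.castSucc z.2)‖
        ≤ κ * (C * ρ / R) ^ (2 * μ) := by
      apply Stmt16Aux.plain_bound hκ.le hR hμ2pos (abs_nonneg _)
        ((abs_le.mpr ⟨hgapz2, by linarith⟩).trans hABC)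
        (hgr1 k0.castSucc k1.succ z.2 hz2) (by norm_num)
    have e4 : ‖(-(a0 / h0)) • (Dφ k0.succ z.2 - Dφ k0.castSucc z.2)‖
        ≤ κ * (C * ρ / R) ^ (2 * μ) := by
      apply Stmt16Aux.tail_bound hκ.le hR hμ2pos hμ2le h0pos ha0pos.le ha0h0
        (hn4.trans hABC) hCρ hgap0
      rw [abs_neg, abs_of_nonneg hT0a]
    rw [hdec]
    refine le_trans (Stmt16Aux.norm_add4_le _ _ _ _) ?_
    linarith
end
end
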